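/- arXiv:2209.14990 — 8 statements merged into one kernel-verified Lean document; each statement's English description precedes it below -/
import Mathlib

section
/- Generalized elliptical potential lemma: Let Phi_1, ..., Phi_K be symmetric positive semidefinite d x d matrices, lambda_0 > 0, and V_k = lambda_0 I + sum_{t < k} Phi_t. Then sum_{k=1}^K min{1, tr(V_k^{-1/2} Phi_k V_k^{-1/2})} <= 2 d log(1 + (sum_{k=1}^K tr(Phi_k)) / (d lambda_0)). -/
open Finset Matrix

/-!
Put `M_k = W_k⁻¹ Φ_k W_k⁻¹ ⪰ 0`. Since `V_{k+1} = V_k + Φ_k = W_k (1 + M_k) W_k`, the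
potential `log det V_k` grows at step `k` by
`log det (1 + M_k) ≥ log (1 + tr M_k) ≥ min {1, tr M_k} / 2`,
the first inequality being `∏ (1 + μᵢ) ≥ 1 + ∑ μᵢ` over the eigenvalues `μᵢ ≥ 0` of `M_k`.
The increments telescope to `log det V_{K+1} - d log λ₀`, and AM–GM on the eigenvalues
of `V_{K+1}` gives `det V_{K+1} ≤ (tr V_{K+1} / d)^d = (λ₀ + ∑ₖ tr Φ_k / d)^d`.
-/

lemma min_one_le_two_mul_log_one_add {x : ℝ} (hx : 0 ≤ x) :
    min 1 x ≤ 2 * Real.log (1 + x) := by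
  have hbound : min 1 x ≤ 2 * (2 * x / (x + 2)) := by
    rw [mul_div_assoc', le_div_iff₀ (by linarith)]
    rcases le_total x 1 with h | h
    · rw [min_eq_right h]; nlinarith
    · rw [min_eq_left h]; linarith
  linarith [Real.le_log_one_add_of_nonneg hx]

lemma Finset.one_add_sum_le_prod_one_add {ι R : Type*} [CommSemiring R] [PartialOrder R]
    [IsOrderedRing R] (s : Finset ι) {f : ι → R} (hf : ∀ i ∈ s, 0 ≤ f i) :
    1 + ∑ i ∈ s, f i ≤ ∏ i ∈ s, (1 + f i) := by
  classical
  induction s using Finset.cons_induction with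
  | empty => simp
  | cons a s _ ih =>
    rw [sum_cons, prod_cons]
    have hfa : 0 ≤ f a := hf a (mem_cons_self a s)
    have ih := ih fun i hi => hf i (mem_cons_of_mem hi)
    have hprod : 1 ≤ ∏ i ∈ s, (1 + f i) :=
      le_trans (le_add_of_nonneg_right (sum_nonneg fun i hi => hf i (mem_cons_of_mem hi))) ih
    calc 1 + (f a + ∑ i ∈ s, f i) = f a * 1 + (1 + ∑ i ∈ s, f i) := by rw [mul_one]; abel
      _ ≤ f a * ∏ i ∈ s, (1 + f i) + ∏ i ∈ s, (1 + f i) := by gcongr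
      _ = (1 + f a) * ∏ i ∈ s, (1 + f i) := by ring

namespace Matrix

variable {n : Type*} [DecidableEq n]

lemma posDef_smul_one_add {c : ℝ} (hc : 0 < c) {P : Matrix n n ℝ} (hP : P.PosSemidef) :
    (c • 1 + P).PosDef :=
  (PosDef.one.smul hc).add_posSemidef hP

variable [Fintype n]

lemma PosSemidef.one_add_trace_le_det_one_add {M : Matrix n n ℝ} (hM : M.PosSemidef) :
    1 + M.trace ≤ (1 + M).det := by
  have hdet : (1 + M).det = ∏ i, (1 + hM.1.eigenvalues i) := by
    set U := hM.1.eigenvectorUnitary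
    conv_lhs => rw [hM.1.spectral_theorem, ← map_one (Unitary.conjStarAlgAut ℝ _ U),
      ← map_add, Unitary.conjStarAlgAut_apply,
      det_conj_of_mul_eq_one (Unitary.mul_star_self_of_mem U.2) (Unitary.star_mul_self_of_mem U.2),
      ← diagonal_one, diagonal_add, det_diagonal]
    rfl
  rw [hdet, hM.1.trace_eq_sum_eigenvalues]
  exact univ.one_add_sum_le_prod_one_add fun i _ => hM.eigenvalues_nonneg i

lemma PosDef.log_det_le_mul_log_trace_div_card [Nonempty n] {A : Matrix n n ℝ}
    (hA : A.PosDef) :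
    Real.log A.det ≤ Fintype.card n * Real.log (A.trace / Fintype.card n) := by
  set d : ℝ := (Fintype.card n : ℝ)
  have hd : 0 < d := by positivity
  have hμ := hA.eigenvalues_pos
  have jensen := strictConcaveOn_log_Ioi.concaveOn.le_map_sum (t := univ)
    (w := fun _ => d⁻¹) (p := hA.1.eigenvalues) (fun _ _ => by positivity)
    (by simp [d, hd.ne']) (fun i _ => hμ i)
  simp only [smul_eq_mul, ← mul_sum] at jensen
  rw [hA.1.det_eq_prod_eigenvalues, hA.1.trace_eq_sum_eigenvalues]
  simp only [RCLike.ofReal_real_eq_id, id_eq]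
  rw [Real.log_prod fun i _ => (hμ i).ne', div_eq_inv_mul]
  calc ∑ i, Real.log (hA.1.eigenvalues i)
      = d * (d⁻¹ * ∑ i, Real.log (hA.1.eigenvalues i)) := by field_simp
    _ ≤ d * Real.log (d⁻¹ * ∑ i, hA.1.eigenvalues i) := by gcongr

lemma PosSemidef.inv_mul_mul_inv {W Φ : Matrix n n ℝ} (hW : W.IsHermitian)
    (hΦ : Φ.PosSemidef) :
    (W⁻¹ * Φ * W⁻¹).PosSemidef := by
  have h := hΦ.conjTranspose_mul_mul_same W⁻¹
  rwa [conjTranspose_nonsing_inv, hW.eq] at h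

lemma log_one_add_trace_inv_mul_mul_inv_le_log_det_sub {W Φ : Matrix n n ℝ}
    (hW : W.IsHermitian) (hWdet : IsUnit W.det) (hΦ : Φ.PosSemidef) :
    Real.log (1 + (W⁻¹ * Φ * W⁻¹).trace) ≤ Real.log (W * W + Φ).det - Real.log (W * W).det := by
  set M := W⁻¹ * Φ * W⁻¹
  have hM : M.PosSemidef := hΦ.inv_mul_mul_inv hW
  have hfactor : W * W + Φ = W * (1 + M) * W := by
    rw [mul_add, add_mul, mul_one]
    simp only [M, ← mul_assoc, mul_nonsing_inv _ hWdet, one_mul]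
    rw [mul_assoc, nonsing_inv_mul _ hWdet, mul_one]
  have hdetW : (W * W).det ≠ 0 := by rw [det_mul]; exact (hWdet.mul hWdet).ne_zero
  have hpos : 0 < 1 + M.trace := by linarith [hM.trace_nonneg]
  have hdetM : (1 + M).det ≠ 0 := (hpos.trans_le hM.one_add_trace_le_det_one_add).ne'
  rw [hfactor, det_mul, det_mul, mul_right_comm, ← det_mul, Real.log_mul hdetW hdetM,
    add_sub_cancel_left]
  exact Real.log_le_log hpos hM.one_add_trace_le_det_one_add

lemma min_one_trace_inv_mul_mul_inv_le {W Φ : Matrix n n ℝ} (hW : W.IsHermitian)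
    (hWdet : IsUnit W.det) (hΦ : Φ.PosSemidef) :
    min 1 (W⁻¹ * Φ * W⁻¹).trace ≤ 2 * (Real.log (W * W + Φ).det - Real.log (W * W).det) :=
  (min_one_le_two_mul_log_one_add (hΦ.inv_mul_mul_inv hW).trace_nonneg).trans <|
    mul_le_mul_of_nonneg_left (log_one_add_trace_inv_mul_mul_inv_le_log_det_sub hW hWdet hΦ)
      zero_le_two

lemma log_det_smul_one_add_sub_le [Nonempty n] {c : ℝ} (hc : 0 < c) {P : Matrix n n ℝ}
    (hP : P.PosSemidef) :
    Real.log (c • 1 + P).det - Real.log (c • 1 : Matrix n n ℝ).det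
      ≤ Fintype.card n * Real.log (1 + P.trace / (Fintype.card n * c)) := by
  set d : ℝ := (Fintype.card n : ℝ)
  have hd : 0 < d := by positivity
  have htrace : (c • 1 + P).trace = d * c + P.trace := by
    simp [trace_add, trace_smul, d, mul_comm]
  have hgap :
      Real.log ((d * c + P.trace) / d) - Real.log c = Real.log (1 + P.trace / (d * c)) := by
    rw [← Real.log_div (by have := hP.trace_nonneg; positivity) hc.ne']
    congr 1
    field_simp
  calc Real.log (c • 1 + P).det - Real.log (c • 1 : Matrix n n ℝ).det
      ≤ d * Real.log ((d * c + P.trace) / d) - d * Real.log c := by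
        rw [← htrace, det_smul, det_one, mul_one, Real.log_pow]
        exact sub_le_sub_right (posDef_smul_one_add hc hP).log_det_le_mul_log_trace_div_card _
    _ = d * Real.log (1 + P.trace / (d * c)) := by rw [← mul_sub, hgap]

end Matrix

/-- Generalized elliptical potential lemma: for symmetric PSD matrices
`Φ₁, …, Φ_K`, `λ₀ > 0`, and `V_k = λ₀ I + ∑_{t<k} Φ_t`, with `W_k` the PSD square root
of `V_k`, one has
`∑_{k=1}^K min{1, tr(W_k⁻¹ Φ_k W_k⁻¹)} ≤ 2 d log(1 + (∑_k tr Φ_k)/(d λ₀))`. -/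
theorem generalized_elliptical_potential
    (d K : ℕ) (hd : 0 < d) (lam0 : ℝ) (hlam : 0 < lam0)
    (Φ : ℕ → Matrix (Fin d) (Fin d) ℝ)
    (hΦ : ∀ k ∈ Finset.Icc 1 K, (Φ k).PosSemidef)
    (V W : ℕ → Matrix (Fin d) (Fin d) ℝ)
    (hV : ∀ k, V k = lam0 • (1 : Matrix (Fin d) (Fin d) ℝ) + ∑ t ∈ Finset.Ico 1 k, Φ t)
    (hW : ∀ k ∈ Finset.Icc 1 K, (W k).PosSemidef ∧ W k * W k = V k) :
    ∑ k ∈ Finset.Icc 1 K, min 1 (((W k)⁻¹ * Φ k * (W k)⁻¹).trace)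
      ≤ 2 * d * Real.log (1 + (∑ k ∈ Finset.Icc 1 K, (Φ k).trace) / (d * lam0)) := by
  have : Nonempty (Fin d) := ⟨⟨0, hd⟩⟩
  have hPsum : ∀ k ≤ K + 1, (∑ t ∈ Ico 1 k, Φ t).PosSemidef := fun k hk =>
    posSemidef_sum _ fun t ht => hΦ t (by simp only [mem_Ico, mem_Icc] at ht ⊢; omega)
  have hstep : ∀ k ∈ Icc 1 K, min 1 ((W k)⁻¹ * Φ k * (W k)⁻¹).trace
      ≤ 2 * (Real.log (V (k + 1)).det - Real.log (V k).det) := by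
    intro k hk
    obtain ⟨hk1, hkK⟩ := mem_Icc.mp hk
    obtain ⟨hWk, hWWk⟩ := hW k hk
    have hWdet : IsUnit (W k).det := isUnit_of_mul_isUnit_left <| by
      rw [← det_mul, hWWk, hV]
      exact (posDef_smul_one_add hlam (hPsum k (by omega))).det_pos.ne'.isUnit
    have hVsucc : V (k + 1) = W k * W k + Φ k := by
      rw [hWWk, hV, hV, sum_Ico_succ_top hk1, add_assoc]
    rw [hVsucc, ← hWWk]
    exact min_one_trace_inv_mul_mul_inv_le hWk.1 hWdet (hΦ k hk)
  have hP := hPsum (K + 1) le_rfl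
  rw [Ico_add_one_right_eq_Icc] at hP
  calc ∑ k ∈ Icc 1 K, min 1 ((W k)⁻¹ * Φ k * (W k)⁻¹).trace
      ≤ ∑ k ∈ Icc 1 K, 2 * (Real.log (V (k + 1)).det - Real.log (V k).det) := sum_le_sum hstep
    _ = 2 * (Real.log (V (K + 1)).det - Real.log (V 1).det) := by
        rw [← mul_sum, ← Ico_add_one_right_eq_Icc, sum_Ico_sub (fun k => Real.log (V k).det)]
        omega
    _ ≤ 2 * d * Real.log (1 + (∑ k ∈ Icc 1 K, (Φ k).trace) / (d * lam0)) := by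
        rw [hV, hV, Ico_self, sum_empty, add_zero, Ico_add_one_right_eq_Icc, mul_assoc,
          ← trace_sum]
        simpa using mul_le_mul_of_nonneg_left (log_det_smul_one_add_sub_le hlam hP) zero_le_two
end

section
/- Let p, q in R^U be entrywise nonnegative vectors over a finite index set U, with ||p||_inf-weighted mass bounds M_p := max over subsets T of U and probability weights pi of sum_{t in T} pi(t) p(t), and similarly M_q. If M_p <= 1 and M_q <= 1, then the mixed (1,2)-norm of p - q satisfies ||p - q||_{1,2}^2 <= 2 (M_p + M_q) || sqrt(p) - sqrt(q) ||_2^2 <= 4 || sqrt(p) - sqrt(q) ||_2^2, where sqrt is applied entrywise. -/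
/-!
Factor `|p - q| = |√p - √q| (√p + √q)` and apply Cauchy–Schwarz inside each group: the
squared group sum of `|p - q|` is at most the group's Hellinger mass times
`∑ (√p + √q)² ≤ 2 (∑ p + ∑ q) ≤ 2 (M_p + M_q)`. Summing over the groups gives the first
inequality, and `M_p + M_q ≤ 2` the second.
-/

open Finset

lemma Real.abs_sub_eq_abs_sqrt_sub_mul_sqrt_add {x y : ℝ} (hx : 0 ≤ x) (hy : 0 ≤ y) :
    |x - y| = |√x - √y| * (√x + √y) := by
  rw [← abs_of_nonneg (by positivity : 0 ≤ √x + √y), ← abs_mul, mul_comm, ← sq_sub_sq,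
    Real.sq_sqrt hx, Real.sq_sqrt hy]

lemma Real.sqrt_add_sqrt_sq_le {x y : ℝ} (hx : 0 ≤ x) (hy : 0 ≤ y) :
    (√x + √y) ^ 2 ≤ 2 * (x + y) := by
  simpa only [Real.sq_sqrt hx, Real.sq_sqrt hy] using add_sq_le (a := √x) (b := √y)

lemma Finset.sq_sum_abs_sub_le_two_mul_sum_add_mul_sum_sq_sqrt_sub {ι : Type*} (s : Finset ι)
    {p q : ι → ℝ} (hp : ∀ i ∈ s, 0 ≤ p i) (hq : ∀ i ∈ s, 0 ≤ q i) :
    (∑ i ∈ s, |p i - q i|) ^ 2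
      ≤ 2 * (∑ i ∈ s, p i + ∑ i ∈ s, q i) * ∑ i ∈ s, (√(p i) - √(q i)) ^ 2 := by
  have hfactor :
      ∑ i ∈ s, |p i - q i| = ∑ i ∈ s, |√(p i) - √(q i)| * (√(p i) + √(q i)) :=
    sum_congr rfl fun i hi => Real.abs_sub_eq_abs_sqrt_sub_mul_sqrt_add (hp i hi) (hq i hi)
  have hsum_sq :
      ∑ i ∈ s, (√(p i) + √(q i)) ^ 2 ≤ 2 * (∑ i ∈ s, p i + ∑ i ∈ s, q i) := by
    rw [← sum_add_distrib, mul_sum]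
    exact sum_le_sum fun i hi => Real.sqrt_add_sqrt_sq_le (hp i hi) (hq i hi)
  calc (∑ i ∈ s, |p i - q i|) ^ 2
      ≤ (∑ i ∈ s, (√(p i) - √(q i)) ^ 2) * ∑ i ∈ s, (√(p i) + √(q i)) ^ 2 := by
        simpa only [hfactor, sq_abs] using sum_mul_sq_le_sq_mul_sq s
          (fun i => |√(p i) - √(q i)|) (fun i => √(p i) + √(q i))
    _ ≤ (∑ i ∈ s, (√(p i) - √(q i)) ^ 2) * (2 * (∑ i ∈ s, p i + ∑ i ∈ s, q i)) :=
        mul_le_mul_of_nonneg_left hsum_sq (sum_nonneg fun i _ => sq_nonneg _)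
    _ = _ := mul_comm _ _

/-- for entrywise nonnegative `p, q ∈ ℝ^U` whose group sums (groups indexed
by `a ∈ A` via `act`) are bounded by `M_p ≤ 1` and `M_q ≤ 1` respectively,
`‖p - q‖_{1,2}² ≤ 2 (M_p + M_q) ‖√p - √q‖₂² ≤ 4 ‖√p - √q‖₂²`. -/
theorem mixed_norm_sq_sub_le_hellinger_bound
    {U A : Type*} [Fintype U] [Fintype A] [DecidableEq A] (act : U → A)
    (p q : U → ℝ) (hp : ∀ u, 0 ≤ p u) (hq : ∀ u, 0 ≤ q u)
    (Mp Mq : ℝ)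
    (hMp : ∀ a, ∑ u ∈ Finset.univ.filter (fun u => act u = a), p u ≤ Mp)
    (hMq : ∀ a, ∑ u ∈ Finset.univ.filter (fun u => act u = a), q u ≤ Mq)
    (hMp1 : Mp ≤ 1) (hMq1 : Mq ≤ 1) :
    (∑ a : A, (∑ u ∈ Finset.univ.filter (fun u => act u = a), |p u - q u|) ^ 2
        ≤ 2 * (Mp + Mq) * ∑ u, (Real.sqrt (p u) - Real.sqrt (q u)) ^ 2) ∧
      (2 * (Mp + Mq) * ∑ u, (Real.sqrt (p u) - Real.sqrt (q u)) ^ 2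
        ≤ 4 * ∑ u, (Real.sqrt (p u) - Real.sqrt (q u)) ^ 2) := by
  have hHellinger_nonneg : 0 ≤ ∑ u, (√(p u) - √(q u)) ^ 2 :=
    sum_nonneg fun u _ => sq_nonneg _
  refine ⟨?_, mul_le_mul_of_nonneg_right (by linarith) hHellinger_nonneg⟩
  calc ∑ a : A, (∑ u ∈ univ.filter (fun u => act u = a), |p u - q u|) ^ 2
      ≤ ∑ a : A, 2 * (Mp + Mq) *
          ∑ u ∈ univ.filter (fun u => act u = a), (√(p u) - √(q u)) ^ 2 := by
        refine sum_le_sum fun a _ => ?_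
        refine (sq_sum_abs_sub_le_two_mul_sum_add_mul_sum_sq_sqrt_sub _
          (fun u _ => hp u) (fun u _ => hq u)).trans ?_
        exact mul_le_mul_of_nonneg_right (by linarith [hMp a, hMq a])
          (sum_nonneg fun u _ => sq_nonneg _)
    _ = 2 * (Mp + Mq) * ∑ u, (√(p u) - √(q u)) ^ 2 := by
        rw [← mul_sum, sum_fiberwise]
end

section
/- Let mu be a finitely supported probability distribution over an index set Theta, let {x_i}_{i in I} be vectors in R^n whose span has dimension at most d, let {q_theta}_{theta in Theta} be probability distributions over I, and let f_theta(x) = max over r in a finite set R of sum_{j=1}^J |<x, y_{theta,j,r}>| for a bounded family of vectors y_{theta,j,r} in R^n. Then E_{theta ~ mu} E_{i ~ q_theta} [ f_theta(x_i) ] <= sqrt( d * E_{theta ~ mu} E_{theta' ~ mu} E_{i ~ q_{theta'}} [ f_theta(x_i)^2 ] ). -/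
/-!
Let `Σ = ∑ᵢ νᵢ xᵢ xᵢᵀ` be the second moment of the `xᵢ` under the marginal `ν = ∑_θ μ_θ q_θ`, and
for each `(θ, i)` pick `z` with `⟨xᵢ, z⟩ = f_θ(xᵢ)` and `|⟨x_{i'}, z⟩| ≤ f_θ(x_{i'})` for all `i'`
(a signed sum of the `y_{θ,j,r}` for a maximising `r`). Every `xᵢ` of positive weight lies in the
range of `Σ`, so `⟨xᵢ, z⟩ = ⟨Σ^{+/2} xᵢ, Σ^{1/2} z⟩`, and Cauchy–Schwarz bounds the left-hand side
by `√(E ‖Σ^{+/2} xᵢ‖²) · √(E ‖Σ^{1/2} z‖²)`. The first factor is `tr (Σ⁺ Σ) = rank Σ ≤ d`; the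
second is `E_{i'∼ν} ⟨x_{i'}, z⟩² ≤ E_{θ'∼μ} E_{i'∼q_{θ'}} f_θ(x_{i'})²`.
-/

open Finset Matrix
open scoped RealInnerProductSpace

/-- The function `f_θ(x) = max_{r ∈ R} ∑_{j=1}^J |⟨x, y_{θ,j,r}⟩|`. -/
noncomputable def maxAbsSumInner {R : Type*} [Fintype R] [Nonempty R] {n J : ℕ}
    (y : Fin J → R → Fin n → ℝ) (v : Fin n → ℝ) : ℝ :=
  Finset.univ.sup' Finset.univ_nonempty (fun r => ∑ j, |v ⬝ᵥ y j r|)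

namespace LinearMap.IsSymmetric

variable {E : Type*} [NormedAddCommGroup E] [InnerProductSpace ℝ E] [FiniteDimensional ℝ E]
  {T : E →ₗ[ℝ] E} {n : ℕ} (hT : T.IsSymmetric) (hn : Module.finrank ℝ E = n)

lemma eigenvalues_eq_inner (k : Fin n) :
    hT.eigenvalues hn k = ⟪hT.eigenvectorBasis hn k, T (hT.eigenvectorBasis hn k)⟫ := by
  simp [hT.apply_eigenvectorBasis, real_inner_smul_right,
    (hT.eigenvectorBasis hn).orthonormal.1 k]

lemma inner_map_self_eq_sum_eigenvalues (v : E) :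
    ⟪v, T v⟫ = ∑ k, hT.eigenvalues hn k * ⟪hT.eigenvectorBasis hn k, v⟫ ^ 2 := by
  rw [← (hT.eigenvectorBasis hn).sum_inner_mul_inner v (T v)]
  refine Finset.sum_congr rfl fun k _ => ?_
  rw [← hT, hT.apply_eigenvectorBasis]
  simp only [RCLike.ofReal_real_eq_id, _root_.id, real_inner_smul_right, real_inner_comm v]
  ring

lemma card_filter_eigenvalues_ne_zero :
    #{k | hT.eigenvalues hn k ≠ 0} = Module.finrank ℝ (LinearMap.range T) := by
  have hker := hT.card_filter_eigenvalues_eq hn 0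
  have hsplit := Finset.card_filter_add_card_filter_not
    (s := Finset.univ) (fun k => hT.eigenvalues hn k = 0)
  have hrank := T.finrank_range_add_finrank_ker
  rw [Module.End.eigenspace_zero] at hker
  simp only [RCLike.ofReal_real_eq_id, _root_.id, Finset.card_univ, Fintype.card_fin] at hker hsplit
  simp only [ne_eq]
  omega

end LinearMap.IsSymmetric

section SecondMoment

variable {E ι : Type*} [NormedAddCommGroup E] [InnerProductSpace ℝ E] [Fintype ι]

noncomputable def secondMoment (ν : ι → ℝ) (x : ι → E) : E →ₗ[ℝ] E :=
  ∑ i, ν i • (InnerProductSpace.rankOne ℝ (x i) (x i)).toLinearMap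

variable (ν : ι → ℝ) (x : ι → E)

lemma secondMoment_apply (v : E) : secondMoment ν x v = ∑ i, (ν i * ⟪x i, v⟫) • x i := by
  simp [secondMoment, mul_smul]

lemma inner_secondMoment (u v : E) :
    ⟪u, secondMoment ν x v⟫ = ∑ i, ν i * (⟪x i, u⟫ * ⟪x i, v⟫) := by
  simp only [secondMoment_apply, inner_sum, real_inner_smul_right, real_inner_comm u]
  exact Finset.sum_congr rfl fun i _ => by ring

lemma secondMoment_isSymmetric : (secondMoment ν x).IsSymmetric := fun u v => by
  rw [real_inner_comm, inner_secondMoment, inner_secondMoment]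
  simp only [mul_comm (⟪x _, u⟫)]

lemma range_secondMoment_le :
    LinearMap.range (secondMoment ν x) ≤ Submodule.span ℝ (Set.range x) := by
  rintro _ ⟨v, rfl⟩
  rw [secondMoment_apply]
  exact Submodule.sum_mem _ fun i _ => Submodule.smul_mem _ _ (Submodule.subset_span ⟨i, rfl⟩)

variable [FiniteDimensional ℝ E]

noncomputable abbrev secondMomentEigenbasis : OrthonormalBasis (Fin (Module.finrank ℝ E)) ℝ E :=
  (secondMoment_isSymmetric ν x).eigenvectorBasis rfl

noncomputable abbrev secondMomentEigenvalues : Fin (Module.finrank ℝ E) → ℝ :=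
  (secondMoment_isSymmetric ν x).eigenvalues rfl

lemma secondMomentEigenvalues_eq (k : Fin (Module.finrank ℝ E)) :
    secondMomentEigenvalues ν x k = ∑ i, ν i * ⟪x i, secondMomentEigenbasis ν x k⟫ ^ 2 :=
  ((secondMoment_isSymmetric ν x).eigenvalues_eq_inner rfl k).trans <| by
    rw [inner_secondMoment]
    simp only [sq]

lemma sum_secondMomentEigenvalues_mul_sq (v : E) :
    ∑ k, secondMomentEigenvalues ν x k * ⟪secondMomentEigenbasis ν x k, v⟫ ^ 2
      = ∑ i, ν i * ⟪x i, v⟫ ^ 2 :=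
  ((secondMoment_isSymmetric ν x).inner_map_self_eq_sum_eigenvalues rfl v).symm.trans <| by
    rw [inner_secondMoment]
    simp only [sq]

-- Since `t / 0 = 0`, the left-hand side is `tr (Σ⁺ Σ) = rank Σ` for `Σ = secondMoment ν x`.
lemma sum_mul_sum_sq_inner_div_le_finrank :
    ∑ i, ν i * ∑ k, ⟪x i, secondMomentEigenbasis ν x k⟫ ^ 2 / secondMomentEigenvalues ν x k
      ≤ Module.finrank ℝ (Submodule.span ℝ (Set.range x)) := by
  calc _ = ∑ k, (∑ i, ν i * ⟪x i, secondMomentEigenbasis ν x k⟫ ^ 2) /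
          secondMomentEigenvalues ν x k := by
        simp only [Finset.mul_sum, Finset.sum_div]
        rw [Finset.sum_comm]
        exact Finset.sum_congr rfl fun k _ => Finset.sum_congr rfl fun i _ => by ring
    _ = ∑ k, secondMomentEigenvalues ν x k / secondMomentEigenvalues ν x k := by
        simp only [secondMomentEigenvalues_eq]
    _ = #{k | secondMomentEigenvalues ν x k ≠ 0} := by
        rw [Finset.card_filter, Nat.cast_sum]
        refine Finset.sum_congr rfl fun k _ => ?_
        by_cases hk : secondMomentEigenvalues ν x k = 0 <;> simp [hk]
    _ = Module.finrank ℝ (LinearMap.range (secondMoment ν x)) := by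
        rw [(secondMoment_isSymmetric ν x).card_filter_eigenvalues_ne_zero]
    _ ≤ Module.finrank ℝ (Submodule.span ℝ (Set.range x)) := by
        exact_mod_cast Submodule.finrank_mono (range_secondMoment_le ν x)

variable {ν}

lemma secondMomentEigenvalues_nonneg (hν : ∀ i, 0 ≤ ν i) (k : Fin (Module.finrank ℝ E)) :
    0 ≤ secondMomentEigenvalues ν x k := by
  rw [secondMomentEigenvalues_eq]
  exact Finset.sum_nonneg fun i _ => mul_nonneg (hν i) (sq_nonneg _)

lemma mul_inner_secondMomentEigenbasis_eq_zero (hν : ∀ i, 0 ≤ ν i)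
    {k : Fin (Module.finrank ℝ E)} (hk : secondMomentEigenvalues ν x k = 0) (i : ι) :
    ν i * ⟪x i, secondMomentEigenbasis ν x k⟫ = 0 := by
  rw [secondMomentEigenvalues_eq, Finset.sum_eq_zero_iff_of_nonneg
    fun i _ => mul_nonneg (hν i) (sq_nonneg _)] at hk
  rcases mul_eq_zero.1 (hk i (Finset.mem_univ i)) with h | h
  · rw [h, zero_mul]
  · rw [pow_eq_zero_iff two_ne_zero |>.1 h, mul_zero]

end SecondMoment

lemma sum_sum_mul_eq_sum_marginal_mul {Θ ι : Type*} [Fintype Θ] [Fintype ι]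
    (w : Θ → ι → ℝ) (h : ι → ℝ) : ∑ θ, ∑ i, w θ i * h i = ∑ i, (∑ θ, w θ i) * h i := by
  simp_rw [Finset.sum_mul]
  exact Finset.sum_comm

theorem sum_mul_inner_le_sqrt_mul_sum_marginal {E ι Θ : Type*} [NormedAddCommGroup E]
    [InnerProductSpace ℝ E] [FiniteDimensional ℝ E] [Fintype ι] [Fintype Θ]
    (w : Θ → ι → ℝ) (hw : ∀ θ i, 0 ≤ w θ i) (x : ι → E) (z : Θ → ι → E)
    {d : ℕ} (hdim : Module.finrank ℝ (Submodule.span ℝ (Set.range x)) ≤ d) :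
    ∑ θ, ∑ i, w θ i * ⟪x i, z θ i⟫ ≤
      √(d * ∑ θ, ∑ i, w θ i * ∑ i', (∑ θ', w θ' i') * ⟪x i', z θ i⟫ ^ 2) := by
  set ν : ι → ℝ := fun i => ∑ θ, w θ i
  have hν (i : ι) : 0 ≤ ν i := Finset.sum_nonneg fun θ _ => hw θ i
  set e := secondMomentEigenbasis ν x
  set ev := secondMomentEigenvalues ν x
  have hev0 (k : Fin _) : 0 ≤ ev k := secondMomentEigenvalues_nonneg x hν k
  have hquad (v : E) : ∑ k, ev k * ⟪e k, v⟫ ^ 2 = ∑ i, ν i * ⟪x i, v⟫ ^ 2 :=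
    sum_secondMomentEigenvalues_mul_sq ν x v
  have hrank : ∑ i, ν i * ∑ k, ⟪x i, e k⟫ ^ 2 / ev k
      ≤ Module.finrank ℝ (Submodule.span ℝ (Set.range x)) :=
    sum_mul_sum_sq_inner_div_le_finrank ν x
  have hker (θ : Θ) (i : ι) (k : Fin _) (hk : ev k = 0) : w θ i * ⟪x i, e k⟫ = 0 := by
    rcases mul_eq_zero.1 (mul_inner_secondMomentEigenbasis_eq_zero x hν hk i) with h | h
    · rw [(Finset.sum_eq_zero_iff_of_nonneg fun θ _ => hw θ i).1 h θ (Finset.mem_univ θ),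
        zero_mul]
    · rw [h, mul_zero]
  -- Cauchy–Schwarz on `⟨xᵢ, z⟩ = ∑ₖ (⟨xᵢ, eₖ⟩ / √evₖ) (√evₖ ⟨eₖ, z⟩)`; the terms with
  -- `evₖ = 0` carry no weight by `hker`.
  have hCS := Finset.sum_sq_le_sum_mul_sum_of_sq_le_mul Finset.univ
    (r := fun p : Θ × ι × Fin _ => w p.1 p.2.1 * (⟪x p.2.1, e p.2.2⟫ * ⟪e p.2.2, z p.1 p.2.1⟫))
    (f := fun p => w p.1 p.2.1 * (⟪x p.2.1, e p.2.2⟫ ^ 2 / ev p.2.2))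
    (g := fun p => w p.1 p.2.1 * (ev p.2.2 * ⟪e p.2.2, z p.1 p.2.1⟫ ^ 2))
    (fun p _ => by have := hw p.1 p.2.1; have := hev0 p.2.2; positivity)
    (fun p _ => by have := hw p.1 p.2.1; have := hev0 p.2.2; positivity)
    (fun ⟨θ, i, k⟩ _ => by
      by_cases hk : ev k = 0
      · rw [← mul_assoc, hker θ i k hk, hk]
        simp
      · exact le_of_eq (by field_simp))
  simp only [Fintype.sum_prod_type, ← Finset.mul_sum, e.sum_inner_mul_inner, hquad,
    sum_sum_mul_eq_sum_marginal_mul w] at hCS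
  refine (le_abs_self _).trans (Real.abs_le_sqrt (hCS.trans ?_))
  exact mul_le_mul_of_nonneg_right (hrank.trans (by exact_mod_cast hdim))
    (Finset.sum_nonneg fun θ _ => Finset.sum_nonneg fun i _ => mul_nonneg (hw θ i)
      (Finset.sum_nonneg fun i' _ => mul_nonneg (hν i') (sq_nonneg _)))

theorem sum_mul_sum_le_sqrt_of_abs_inner_le {E Θ I : Type*} [NormedAddCommGroup E]
    [InnerProductSpace ℝ E] [FiniteDimensional ℝ E] [Fintype Θ] [Fintype I]
    (μ : Θ → ℝ) (hμ0 : ∀ θ, 0 ≤ μ θ)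
    (q : Θ → I → ℝ) (hq0 : ∀ θ i, 0 ≤ q θ i) (hq1 : ∀ θ, ∑ i, q θ i = 1)
    (x : I → E) (F : Θ → I → ℝ) (z : Θ → I → E)
    (hz_eq : ∀ θ i, ⟪x i, z θ i⟫ = F θ i) (hz_le : ∀ θ i i', |⟪x i', z θ i⟫| ≤ F θ i')
    {d : ℕ} (hdim : Module.finrank ℝ (Submodule.span ℝ (Set.range x)) ≤ d) :
    ∑ θ, μ θ * ∑ i, q θ i * F θ i
      ≤ √(d * ∑ θ, μ θ * ∑ θ', μ θ' * ∑ i, q θ' i * F θ i ^ 2) := by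
  have hw0 (θ : Θ) (i : I) : 0 ≤ μ θ * q θ i := mul_nonneg (hμ0 θ) (hq0 θ i)
  have hmoment : ∑ θ, ∑ i, μ θ * q θ i * ∑ i', (∑ θ', μ θ' * q θ' i') * ⟪x i', z θ i⟫ ^ 2
      ≤ ∑ θ, μ θ * ∑ θ', μ θ' * ∑ i, q θ' i * F θ i ^ 2 := by
    calc _ ≤ ∑ θ, ∑ i, μ θ * q θ i * ∑ i', (∑ θ', μ θ' * q θ' i') * F θ i' ^ 2 := by
          gcongr ∑ θ, ∑ i, _ * ∑ i', _ * ?_ with θ _ i _ i' _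
          · exact hw0 θ i
          · exact Finset.sum_nonneg fun θ' _ => hw0 θ' i'
          · rw [← sq_abs]
            exact pow_le_pow_left₀ (abs_nonneg _) (hz_le θ i i') 2
      _ = _ := by
          refine Finset.sum_congr rfl fun θ _ => ?_
          rw [← Finset.sum_mul, ← Finset.mul_sum, hq1, mul_one,
            ← sum_sum_mul_eq_sum_marginal_mul]
          simp only [Finset.mul_sum, mul_assoc]
  calc ∑ θ, μ θ * ∑ i, q θ i * F θ i = ∑ θ, ∑ i, μ θ * q θ i * ⟪x i, z θ i⟫ := by
        simp only [hz_eq, Finset.mul_sum, mul_assoc]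
    _ ≤ _ := sum_mul_inner_le_sqrt_mul_sum_marginal _ hw0 x z hdim
    _ ≤ _ := Real.sqrt_le_sqrt (mul_le_mul_of_nonneg_left hmoment (Nat.cast_nonneg d))

lemma LinearEquiv.finrank_span_range_comp {K M N ι : Type*} [Ring K] [AddCommGroup M]
    [AddCommGroup N] [Module K M] [Module K N] (f : M ≃ₗ[K] N) (x : ι → M) :
    Module.finrank K (Submodule.span K (Set.range (f ∘ x)))
      = Module.finrank K (Submodule.span K (Set.range x)) := by
  rw [Set.range_comp, Submodule.span_image_linearEquiv, f.finrank_map_eq]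

lemma exists_dotProduct_eq_maxAbsSumInner {R : Type*} [Fintype R] [Nonempty R] {n J : ℕ}
    (y : Fin J → R → Fin n → ℝ) (v : Fin n → ℝ) :
    ∃ u, v ⬝ᵥ u = maxAbsSumInner y v ∧ ∀ v', |v' ⬝ᵥ u| ≤ maxAbsSumInner y v' := by
  obtain ⟨r, -, hr⟩ := Finset.exists_mem_eq_sup' Finset.univ_nonempty
    (fun r => ∑ j, |v ⬝ᵥ y j r|)
  have habs_sign (s : SignType) : |(s : ℝ)| ≤ 1 := by cases s <;> simp
  refine ⟨∑ j, (SignType.sign (v ⬝ᵥ y j r) : ℝ) • y j r, ?_, fun v' => ?_⟩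
  · simp only [maxAbsSumInner, hr, dotProduct_sum, dotProduct_smul, smul_eq_mul, sign_mul_self]
  · calc |v' ⬝ᵥ ∑ j, (SignType.sign (v ⬝ᵥ y j r) : ℝ) • y j r|
        ≤ ∑ j, |v' ⬝ᵥ y j r| := by
          rw [dotProduct_sum]
          refine (Finset.abs_sum_le_sum_abs _ _).trans (Finset.sum_le_sum fun j _ => ?_)
          rw [dotProduct_smul, smul_eq_mul, abs_mul]
          exact mul_le_of_le_one_left (abs_nonneg _) (habs_sign _)
      _ ≤ maxAbsSumInner y v' :=
          Finset.le_sup' (fun r => ∑ j, |v' ⬝ᵥ y j r|) (Finset.mem_univ r)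

theorem decoupling_argument_general
    {Θ I R : Type*} [Fintype Θ] [Fintype I] [Fintype R] [Nonempty R]
    (n d J : ℕ)
    (μ : Θ → ℝ) (hμ0 : ∀ θ, 0 ≤ μ θ)
    (q : Θ → I → ℝ) (hq0 : ∀ θ i, 0 ≤ q θ i) (hq1 : ∀ θ, ∑ i, q θ i = 1)
    (x : I → Fin n → ℝ)
    (hdim : Module.finrank ℝ (Submodule.span ℝ (Set.range x)) ≤ d)
    (y : Θ → Fin J → R → Fin n → ℝ) :
    ∑ θ, μ θ * ∑ i, q θ i * maxAbsSumInner (y θ) (x i)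
      ≤ Real.sqrt (d * ∑ θ, μ θ * ∑ θ', μ θ' * ∑ i, q θ' i *
          (maxAbsSumInner (y θ) (x i)) ^ 2) := by
  choose u hu_eq hu_le using fun θ i => exists_dotProduct_eq_maxAbsSumInner (y θ) (x i)
  set toL := (WithLp.linearEquiv 2 ℝ (Fin n → ℝ)).symm
  have hinner (v v' : Fin n → ℝ) : ⟪toL v, toL v'⟫ = v ⬝ᵥ v' := by
    simp [toL, EuclideanSpace.inner_toLp_toLp, dotProduct_comm]
  exact sum_mul_sum_le_sqrt_of_abs_inner_le μ hμ0 q hq0 hq1 (toL ∘ x) _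
    (fun θ i => toL (u θ i)) (fun θ i => (hinner _ _).trans (hu_eq θ i))
    (fun θ i i' => by rw [Function.comp_apply, hinner]; exact hu_le θ i (x i'))
    (by rwa [toL.finrank_span_range_comp])

/-- Decoupling argument: for a finitely supported distribution `μ` on `Θ`,
vectors `x_i` spanning a subspace of dimension `≤ d`, distributions `q_θ` on `I`, and
`f_θ(x) = max_r ∑_j |⟨x, y_{θ,j,r}⟩|`,
`E_{θ∼μ} E_{i∼q_θ}[f_θ(x_i)] ≤ √(d · E_{θ∼μ} E_{θ'∼μ} E_{i∼q_{θ'}}[f_θ(x_i)²])`. -/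
theorem decoupling_argument
    {Θ I R : Type*} [Fintype Θ] [Fintype I] [Fintype R] [Nonempty R]
    (n d J : ℕ)
    (μ : Θ → ℝ) (hμ0 : ∀ θ, 0 ≤ μ θ) (hμ1 : ∑ θ, μ θ = 1)
    (q : Θ → I → ℝ) (hq0 : ∀ θ i, 0 ≤ q θ i) (hq1 : ∀ θ, ∑ i, q θ i = 1)
    (x : I → Fin n → ℝ)
    (hdim : Module.finrank ℝ (Submodule.span ℝ (Set.range x)) ≤ d)
    (y : Θ → Fin J → R → Fin n → ℝ) :
    ∑ θ, μ θ * ∑ i, q θ i * maxAbsSumInner (y θ) (x i)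
      ≤ Real.sqrt (d * ∑ θ, μ θ * ∑ θ', μ θ' * ∑ i, q θ' i *
          (maxAbsSumInner (y θ) (x i)) ^ 2) :=
  decoupling_argument_general n d J μ hμ0 q hq0 hq1 x hdim y
end

section
/- Linear decoupling inequality: Let mu be a finitely supported distribution over Theta, {x_i} in R^n with span of dimension at most d, {q_theta} distributions over I, and y_theta in R^n bounded. Then E_{theta ~ mu} E_{i ~ q_theta} [ |<x_i, y_theta>| ] <= sqrt( d * E_{theta, theta' ~ mu} E_{i ~ q_{theta'}} [ <x_i, y_theta>^2 ] ). -/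
/-!
The functions `f_θ(i) = ⟨x_i, y_θ⟩` all lie in a space `U` of functions on `I` of dimension
at most `d`. Let `w` be the `I`-marginal of the joint law `p(θ, i) = μ(θ) q_θ(i)` and `ℓ_i` the
leverage scores of `U` in `L²(w)`: `w_i f(i)² ≤ ℓ_i ‖f‖²_w` for `f ∈ U`, and `∑ ℓ_i ≤ dim U`
because `∑ ℓ_i` is the trace of the orthogonal projection onto the image of `U` under
`f ↦ √w · f` in `ℓ²(I)`. Cauchy–Schwarz over the pairs `(θ, i)`, weighted by `p`, then
gives `E_p |f_θ(i)| ≤ √(∑ ℓ_i) · √(E_μ ‖f_θ‖²_w)`.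
-/

open Finset Matrix

namespace Submodule

variable {𝕜 E : Type*} [RCLike 𝕜] [NormedAddCommGroup E] [InnerProductSpace 𝕜 E]
  (K : Submodule 𝕜 E) [K.HasOrthogonalProjection]

theorem norm_inner_le_norm_starProjection_mul_norm {v : E} (hv : v ∈ K) (u : E) :
    ‖(inner 𝕜 u v : 𝕜)‖ ≤ ‖K.starProjection u‖ * ‖v‖ := by
  rw [← K.starProjection_eq_self_iff.mpr hv, ← inner_starProjection_left_eq_right,
    K.starProjection_eq_self_iff.mpr hv]
  exact norm_inner_le_norm _ _

theorem sum_norm_sq_starProjection_eq_finrank {ι : Type*} [Fintype ι]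
    (b : OrthonormalBasis ι 𝕜 E) :
    ∑ i, ‖K.starProjection (b i)‖ ^ 2 = Module.finrank 𝕜 K := by
  have : FiniteDimensional 𝕜 E := b.toBasis.finiteDimensional_of_finite
  let c := stdOrthonormalBasis 𝕜 K
  calc ∑ i, ‖K.starProjection (b i)‖ ^ 2
      = ∑ i, ∑ k, ‖(inner 𝕜 (b i) (c k : E) : 𝕜)‖ ^ 2 := by
        refine sum_congr rfl fun i _ => ?_
        rw [starProjection_apply, norm_coe, ← c.sum_sq_norm_inner_right]
        refine sum_congr rfl fun k _ => ?_
        rw [inner_orthogonalProjectionOnto_eq_of_mem_left, ← norm_inner_symm]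
    _ = ∑ k, ‖(c k : E)‖ ^ 2 := by
        rw [sum_comm]
        exact sum_congr rfl fun k _ => b.sum_sq_norm_inner_right _
    _ = Module.finrank 𝕜 K := by
        simp [c.orthonormal.1 _, norm_coe]

end Submodule

theorem Finset.sum_mul_abs_le_sqrt_mul_sqrt {ι : Type*} (s : Finset ι) {p h a c : ι → ℝ}
    (hp : ∀ k, 0 ≤ p k) (ha : ∀ k, 0 ≤ a k) (hc : ∀ k, 0 ≤ c k)
    (hh : ∀ k, 0 < p k → h k ^ 2 ≤ a k * c k) :
    ∑ k ∈ s, p k * |h k| ≤ √(∑ k ∈ s, p k * a k) * √(∑ k ∈ s, p k * c k) := by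
  refine (sum_le_sum fun k _ => ?_).trans
    (Real.sum_sqrt_mul_sqrt_le s (fun k => mul_nonneg (hp k) (ha k))
      (fun k => mul_nonneg (hp k) (hc k)))
  have hsq : p k ^ 2 * h k ^ 2 ≤ p k ^ 2 * (a k * c k) := by
    rcases (hp k).eq_or_lt with hpk | hpk
    · simp [← hpk]
    · exact mul_le_mul_of_nonneg_left (hh k hpk) (sq_nonneg _)
  have hpa := mul_nonneg (hp k) (ha k)
  rw [← Real.sqrt_mul hpa, Real.le_sqrt (mul_nonneg (hp k) (abs_nonneg _))
    (mul_nonneg hpa (mul_nonneg (hp k) (hc k)))]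
  calc (p k * |h k|) ^ 2 = p k ^ 2 * h k ^ 2 := by rw [mul_pow, sq_abs]
    _ ≤ p k ^ 2 * (a k * c k) := hsq
    _ = p k * a k * (p k * c k) := by ring

section WeightedLeverage

variable {I : Type*}

noncomputable def weightedEmbedding (w : I → ℝ) : (I → ℝ) →ₗ[ℝ] EuclideanSpace ℝ I :=
  (EuclideanSpace.equiv I ℝ).symm.toLinearMap ∘ₗ LinearMap.pi fun i => √(w i) • LinearMap.proj i

theorem weightedEmbedding_apply (w f : I → ℝ) (i : I) :
    weightedEmbedding w f i = √(w i) * f i := rfl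

variable [Fintype I]

theorem norm_sq_weightedEmbedding {w : I → ℝ} (hw : ∀ i, 0 ≤ w i) (f : I → ℝ) :
    ‖weightedEmbedding w f‖ ^ 2 = ∑ i, w i * f i ^ 2 := by
  simp_rw [EuclideanSpace.norm_sq_eq, Real.norm_eq_abs, sq_abs, weightedEmbedding_apply, mul_pow,
    Real.sq_sqrt (hw _)]

/-- The leverage scores of `U` in `L²(w)`: `weightedLeverage w U i` is the largest value of
`w i * f i ^ 2` over `f ∈ U` with `∑ j, w j * f j ^ 2 ≤ 1`. -/
noncomputable def weightedLeverage (w : I → ℝ) (U : Submodule ℝ (I → ℝ)) (i : I) : ℝ :=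
  ‖(U.map (weightedEmbedding w)).starProjection (EuclideanSpace.basisFun I ℝ i)‖ ^ 2

theorem mul_sq_le_weightedLeverage_mul {w : I → ℝ} (hw : ∀ i, 0 ≤ w i)
    {U : Submodule ℝ (I → ℝ)} {f : I → ℝ} (hf : f ∈ U) (i : I) :
    w i * f i ^ 2 ≤ weightedLeverage w U i * ∑ j, w j * f j ^ 2 := by
  have hcs := (U.map (weightedEmbedding w)).norm_inner_le_norm_starProjection_mul_norm
    (Submodule.mem_map_of_mem hf) (EuclideanSpace.basisFun I ℝ i)
  rw [EuclideanSpace.basisFun_inner, weightedEmbedding_apply, Real.norm_eq_abs] at hcs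
  calc w i * f i ^ 2 = |√(w i) * f i| ^ 2 := by rw [sq_abs, mul_pow, Real.sq_sqrt (hw i)]
    _ ≤ _ := pow_le_pow_left₀ (abs_nonneg _) hcs 2
    _ = _ := by rw [mul_pow, norm_sq_weightedEmbedding hw, weightedLeverage]

theorem sum_weightedLeverage_le_finrank (w : I → ℝ) (U : Submodule ℝ (I → ℝ)) :
    ∑ i, weightedLeverage w U i ≤ Module.finrank ℝ U := by
  unfold weightedLeverage
  rw [Submodule.sum_norm_sq_starProjection_eq_finrank]
  exact_mod_cast Submodule.finrank_map_le _ _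

end WeightedLeverage

theorem sum_mul_abs_le_sqrt_finrank_mul {Θ I : Type*} [Fintype Θ] [Fintype I]
    (U : Submodule ℝ (I → ℝ)) (p : Θ → I → ℝ) (hp : ∀ θ i, 0 ≤ p θ i)
    (f : Θ → I → ℝ) (hf : ∀ θ, f θ ∈ U) :
    ∑ θ, ∑ i, p θ i * |f θ i|
      ≤ √(Module.finrank ℝ U * ∑ θ, (∑ i, p θ i) * ∑ i, (∑ θ', p θ' i) * f θ i ^ 2) := by
  set w : I → ℝ := fun i => ∑ θ', p θ' i
  have hw : ∀ i, 0 ≤ w i := fun i => sum_nonneg fun θ _ => hp θ i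
  set ℓ := weightedLeverage w U
  set c : Θ → ℝ := fun θ => ∑ i, w i * f θ i ^ 2
  have hcs := Finset.sum_mul_abs_le_sqrt_mul_sqrt univ (p := fun k : Θ × I => p k.1 k.2)
    (h := fun k => f k.1 k.2) (a := fun k => ℓ k.2 / w k.2) (c := fun k => c k.1)
    (fun k => hp k.1 k.2) (fun k => div_nonneg (sq_nonneg _) (hw k.2))
    (fun k => sum_nonneg fun i _ => mul_nonneg (hw i) (sq_nonneg _)) fun ⟨θ, i⟩ hpk => by
      have hwi : 0 < w i := hpk.trans_le (single_le_sum (fun θ' _ => hp θ' i) (mem_univ θ))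
      rw [div_mul_eq_mul_div, le_div_iff₀ hwi, mul_comm]
      exact mul_sq_le_weightedLeverage_mul hw (hf θ) i
  have hℓ : ∑ k : Θ × I, p k.1 k.2 * (ℓ k.2 / w k.2) ≤ Module.finrank ℝ U := by
    calc ∑ k : Θ × I, p k.1 k.2 * (ℓ k.2 / w k.2) = ∑ i, w i * (ℓ i / w i) := by
          rw [Fintype.sum_prod_type, sum_comm]
          simp_rw [← sum_mul]
          rfl
      _ ≤ ∑ i, ℓ i := sum_le_sum fun i _ => by
          rcases (hw i).eq_or_lt with hwi | hwi
          · rw [← hwi, zero_mul]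
            exact sq_nonneg _
          · rw [mul_div_cancel₀ _ hwi.ne']
      _ ≤ Module.finrank ℝ U := sum_weightedLeverage_le_finrank w U
  calc ∑ θ, ∑ i, p θ i * |f θ i| = ∑ k : Θ × I, p k.1 k.2 * |f k.1 k.2| :=
        (Fintype.sum_prod_type' _).symm
    _ ≤ √(Module.finrank ℝ U) * √(∑ k : Θ × I, p k.1 k.2 * c k.1) :=
        hcs.trans (mul_le_mul_of_nonneg_right (Real.sqrt_le_sqrt hℓ) (Real.sqrt_nonneg _))
    _ = _ := by
        rw [← Real.sqrt_mul (Nat.cast_nonneg _)]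
        simp only [Fintype.sum_prod_type, ← sum_mul]
        rfl

theorem linear_decoupling_general
    {Θ I : Type*} [Fintype Θ] [Fintype I] (n d : ℕ)
    (μ : Θ → ℝ) (hμ0 : ∀ θ, 0 ≤ μ θ)
    (q : Θ → I → ℝ) (hq0 : ∀ θ i, 0 ≤ q θ i) (hq1 : ∀ θ, ∑ i, q θ i = 1)
    (x : I → Fin n → ℝ)
    (hdim : Module.finrank ℝ (Submodule.span ℝ (Set.range x)) ≤ d)
    (y : Θ → Fin n → ℝ) :
    ∑ θ, μ θ * ∑ i, q θ i * |x i ⬝ᵥ y θ|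
      ≤ Real.sqrt (d * ∑ θ, μ θ * ∑ θ', μ θ' * ∑ i, q θ' i * (x i ⬝ᵥ y θ) ^ 2) := by
  have hrank : Module.finrank ℝ (LinearMap.range (of x).mulVecLin) ≤ d :=
    ((of x).rank_eq_finrank_span_row).trans_le hdim
  have hmarg : ∀ θ, ∑ i, μ θ * q θ i = μ θ := fun θ => by rw [← mul_sum, hq1, mul_one]
  have hmix : ∀ θ, ∑ i, (∑ θ', μ θ' * q θ' i) * (x i ⬝ᵥ y θ) ^ 2
      = ∑ θ', μ θ' * ∑ i, q θ' i * (x i ⬝ᵥ y θ) ^ 2 := fun θ => by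
    simp_rw [sum_mul, mul_sum, mul_assoc]
    exact sum_comm
  calc ∑ θ, μ θ * ∑ i, q θ i * |x i ⬝ᵥ y θ|
      = ∑ θ, ∑ i, μ θ * q θ i * |x i ⬝ᵥ y θ| := by simp_rw [mul_sum, mul_assoc]
    _ ≤ _ := sum_mul_abs_le_sqrt_finrank_mul (LinearMap.range (of x).mulVecLin)
        (fun θ i => μ θ * q θ i) (fun θ i => mul_nonneg (hμ0 θ) (hq0 θ i))
        (fun θ i => x i ⬝ᵥ y θ) (fun θ => LinearMap.mem_range.mpr ⟨y θ, rfl⟩)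
    _ ≤ _ := by
        simp only [hmarg, hmix]
        rw [Real.sqrt_mul (Nat.cast_nonneg _), Real.sqrt_mul (Nat.cast_nonneg _)]
        gcongr

/-- Linear decoupling inequality: for a finitely supported distribution `μ`
on `Θ`, vectors `x_i` spanning a subspace of dimension `≤ d`, distributions `q_θ` on `I`,
and vectors `y_θ`,
`E_{θ∼μ} E_{i∼q_θ}[|⟨x_i, y_θ⟩|] ≤ √(d · E_{θ,θ'∼μ} E_{i∼q_{θ'}}[⟨x_i, y_θ⟩²])`. -/
theorem linear_decoupling
    {Θ I : Type*} [Fintype Θ] [Fintype I] (n d : ℕ)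
    (μ : Θ → ℝ) (hμ0 : ∀ θ, 0 ≤ μ θ) (hμ1 : ∑ θ, μ θ = 1)
    (q : Θ → I → ℝ) (hq0 : ∀ θ i, 0 ≤ q θ i) (hq1 : ∀ θ, ∑ i, q θ i = 1)
    (x : I → Fin n → ℝ)
    (hdim : Module.finrank ℝ (Submodule.span ℝ (Set.range x)) ≤ d)
    (y : Θ → Fin n → ℝ) :
    ∑ θ, μ θ * ∑ i, q θ i * |x i ⬝ᵥ y θ|
      ≤ Real.sqrt (d * ∑ θ, μ θ * ∑ θ', μ θ' * ∑ i, q θ' i * (x i ⬝ᵥ y θ) ^ 2) :=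
  linear_decoupling_general n d μ hμ0 q hq0 hq1 x hdim y
end

section
/- Barycentric spanner factorization: Let {x_i}_{i in I} be a family of vectors in R^n such that span{x_i} has dimension at most d and R = max_i ||x_i||_1 < infinity (I finite). Then there exist vectors v_i in R^d and a matrix F in R^{n x d} such that x_i = F v_i for all i, ||v_i||_infinity <= 1 for all i, and ||F||_{1 -> 1} <= R (i.e., every column of F has 1-norm at most R). -/
/-!
Among all `d`-tuples drawn from the vectors `x_i`, pick one maximising the absolute value of the
determinant in the span of the `x_i`. The maximum is nonzero because the `x_i` contain a basis of
their span, so the maximiser `w` is a basis. Replacing `w_k` by `x_i` multiplies that determinant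
by the `k`-th coordinate of `x_i` in the basis `w` (Cramer's rule), so maximality bounds every
coordinate by `1`. Taking the `w_k` as the columns of `F`, each column has `1`-norm at most `R`;
zero columns pad `F` when the span has dimension smaller than `d`.
-/

open Matrix Module Submodule Function

section

variable {K V ι : Type*} [Field K] [AddCommGroup V] [Module K V] [Fintype ι]

theorem Module.Basis.exists_isUnit_det_of_le_span [DecidableEq ι] (e : Basis ι K V) {s : Set V}
    (hs : ⊤ ≤ span K s) : ∃ w : ι → V, (∀ k, w k ∈ s) ∧ IsUnit (e.det w) := by
  let b := (Basis.ofSpan hs).reindex ((Basis.ofSpan hs).indexEquiv e)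
  refine ⟨b, fun k => Basis.ofSpan_subset hs ?_, e.isUnit_det b⟩
  simp [b]

variable [LinearOrder K]

variable (K) in
def IsBarycentricSpanner (X : Set V) (w : ι → V) : Prop :=
  (∀ k, w k ∈ X) ∧ ∀ x ∈ X, ∃ α : ι → K, (∀ k, |α k| ≤ 1) ∧ ∑ k, α k • w k = x

theorem IsBarycentricSpanner.map {W : Type*} [AddCommGroup W] [Module K W] {X : Set V}
    {w : ι → V} (h : IsBarycentricSpanner K X w) (f : V →ₗ[K] W) :
    IsBarycentricSpanner K (f '' X) (f ∘ w) := by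
  refine ⟨fun k => Set.mem_image_of_mem f (h.1 k), ?_⟩
  rintro _ ⟨x, hx, rfl⟩
  obtain ⟨α, hα, rfl⟩ := h.2 x hx
  exact ⟨α, hα, by simp⟩

variable [IsStrictOrderedRing K]

theorem Module.Basis.abs_mk_coord_le_one [DecidableEq ι] (e : Basis ι K V) {v : ι → V}
    (hli : LinearIndependent K v) (hsp : ⊤ ≤ span K (Set.range v)) (k : ι) (u : V)
    (h : |e.det (update v k u)| ≤ |e.det v|) : |(Basis.mk hli hsp).coord k u| ≤ 1 := by
  have hdet : e.det (update v k u) = e.det v * (Basis.mk hli hsp).coord k u := by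
    simpa using (LinearMap.congr_fun (e.det_smul_mk_coord_eq_det_update hli hsp k) u).symm
  have hpos : 0 < |e.det v| :=
    abs_pos.mpr (e.is_basis_iff_det.mp ⟨hli, top_le_iff.mp hsp⟩).ne_zero
  rw [hdet, abs_mul] at h
  exact (mul_le_iff_le_one_right hpos).mp h

theorem Module.Basis.exists_isBarycentricSpanner [DecidableEq ι] (e : Basis ι K V) {X : Set V}
    (hX : X.Finite) (hs : ⊤ ≤ span K X) : ∃ w : ι → V, IsBarycentricSpanner K X w := by
  have := hX.to_subtype
  obtain ⟨w₀, hw₀X, hw₀⟩ := e.exists_isUnit_det_of_le_span hs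
  have : Nonempty (ι → X) := ⟨fun k => ⟨w₀ k, hw₀X k⟩⟩
  obtain ⟨W, hW⟩ := Finite.exists_max fun W : ι → X => |e.det ((↑) ∘ W)|
  have hunit : IsUnit (e.det ((↑) ∘ W)) :=
    isUnit_iff_ne_zero.mpr <| abs_pos.mp <| (abs_pos.mpr hw₀.ne_zero).trans_le <|
      hW fun k => ⟨w₀ k, hw₀X k⟩
  obtain ⟨hli, hsp⟩ := e.is_basis_iff_det.mpr hunit
  refine ⟨((↑) : X → V) ∘ W, fun k => (W k).2,
    fun x hx => ⟨(Basis.mk hli hsp.ge).repr x, fun k => ?_, ?_⟩⟩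
  · have hmax := hW (update W k ⟨x, hx⟩)
    rw [comp_update] at hmax
    exact e.abs_mk_coord_le_one hli hsp.ge k x hmax
  · simpa using (Basis.mk hli hsp.ge).sum_repr x

theorem exists_isBarycentricSpanner {X : Set V} (hX : X.Finite) :
    ∃ w : Fin (finrank K (span K X)) → V, IsBarycentricSpanner K X w := by
  have := FiniteDimensional.span_of_finite K hX
  obtain ⟨w, hw⟩ := (Module.finBasis K (span K X)).exists_isBarycentricSpanner
    (hX.preimage Subtype.val_injective.injOn) span_span_coe_preimage.ge
  have hXimage : ((↑) : span K X → V) '' ((↑) ⁻¹' X) = X :=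
    Set.image_preimage_eq_of_subset (by simp [subset_span])
  exact ⟨_, hXimage ▸ hw.map (span K X).subtype⟩

end

/-- Barycentric spanner factorization: if `{x_i}` in `ℝⁿ` span a subspace
of dimension at most `d` and `‖x_i‖₁ ≤ R` for all `i`, then there exist `v_i ∈ ℝᵈ` with
`‖v_i‖_∞ ≤ 1` and a matrix `F ∈ ℝ^{n×d}` with every column of `1`-norm at most `R`
(i.e. `‖F‖_{1→1} ≤ R`) such that `x_i = F v_i` for all `i`. -/
theorem barycentric_spanner_factorization
    {I : Type*} [Fintype I] (n d : ℕ) (x : I → Fin n → ℝ)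
    (hdim : Module.finrank ℝ (Submodule.span ℝ (Set.range x)) ≤ d)
    (R : ℝ) (hR : 0 ≤ R) (hx : ∀ i, ∑ j, |x i j| ≤ R) :
    ∃ (v : I → Fin d → ℝ) (F : Matrix (Fin n) (Fin d) ℝ),
      (∀ i, x i = F.mulVec (v i)) ∧
      (∀ i j, |v i j| ≤ 1) ∧
      (∀ c : Fin d, ∑ r, |F r c| ≤ R) := by
  obtain ⟨w, hwX, hw⟩ := exists_isBarycentricSpanner (K := ℝ) (Set.finite_range x)
  choose α hα hαx using Set.forall_mem_range.mp hw
  obtain ⟨m, rfl⟩ := Nat.exists_eq_add_of_le hdim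
  refine ⟨fun i => Fin.append (α i) 0, of fun p c => Fin.append w 0 c p,
    fun i => ?_, fun i => ?_, ?_⟩
  · rw [← hαx i]
    ext p
    simp [mulVec, dotProduct, Fin.sum_univ_add, mul_comm]
  · refine Fin.addCases (fun k => ?_) (fun k => ?_) <;> simp [hα]
  · refine Fin.addCases (fun k => ?_) (fun k => ?_)
    · obtain ⟨i, hi⟩ := hwX k
      simpa [← hi] using hx i
    · simpa using hR
end

section
/- Hellinger conditioning: For any pair of random variables (X,Y) with joint distributions P_{X,Y} and Q_{X,Y} on a finite space, the expectation under P_X of the squared Hellinger distance between the conditional laws satisfies E_{X ~ P_X}[ D_H^2( P_{Y|X}, Q_{Y|X} ) ] <= 2 D_H^2( P_{X,Y}, Q_{X,Y} ). -/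
/-!
Write `p x, q x` for the marginals and `u = P_{Y|X=x}`, `v = Q_{Y|X=x}`, so that
`P x = p x • u` and `Q x = q x • v` (also when a marginal vanishes). With `a` the Bhattacharyya
coefficient of `u, v`, one has `D_H²(u, v) = 2 - 2a` and
`D_H²(p • u, q • v) = p + q - 2 √(pq) a`, so the claim holds for each `x` separately, because
`2 √(pq) a ≤ (p + q) a ≤ p a + q` by AM-GM and `a ≤ 1` (Cauchy–Schwarz).
-/

open Finset

noncomputable section

variable {Y : Type*} [Fintype Y]

def hellingerSq (f g : Y → ℝ) : ℝ := ∑ y, (√(f y) - √(g y)) ^ 2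

def bhattacharyya (f g : Y → ℝ) : ℝ := ∑ y, √(f y) * √(g y)

lemma bhattacharyya_nonneg (f g : Y → ℝ) : 0 ≤ bhattacharyya f g :=
  sum_nonneg fun _ _ => by positivity

lemma bhattacharyya_le_one {f g : Y → ℝ} (hf0 : ∀ y, 0 ≤ f y) (hf1 : ∑ y, f y = 1)
    (hg0 : ∀ y, 0 ≤ g y) (hg1 : ∑ y, g y = 1) : bhattacharyya f g ≤ 1 := by
  simpa [bhattacharyya, hf1, hg1] using Real.sum_sqrt_mul_sqrt_le univ hf0 hg0

lemma bhattacharyya_smul {s t : ℝ} (hs : 0 ≤ s) (ht : 0 ≤ t) (f g : Y → ℝ) :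
    bhattacharyya (s • f) (t • g) = √s * √t * bhattacharyya f g := by
  simp only [bhattacharyya, mul_sum, Pi.smul_apply, smul_eq_mul, Real.sqrt_mul hs,
    Real.sqrt_mul ht]
  exact sum_congr rfl fun _ _ => by ring

lemma hellingerSq_eq {f g : Y → ℝ} (hf : ∀ y, 0 ≤ f y) (hg : ∀ y, 0 ≤ g y) :
    hellingerSq f g = ∑ y, f y + ∑ y, g y - 2 * bhattacharyya f g := by
  rw [hellingerSq, bhattacharyya, ← sum_add_distrib, mul_sum, ← sum_sub_distrib]
  refine sum_congr rfl fun y _ => ?_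
  rw [sub_sq, Real.sq_sqrt (hf y), Real.sq_sqrt (hg y)]
  ring

lemma mul_hellingerSq_le_two_mul_hellingerSq_smul {u v : Y → ℝ}
    (hu0 : ∀ y, 0 ≤ u y) (hu1 : ∑ y, u y = 1) (hv0 : ∀ y, 0 ≤ v y) (hv1 : ∑ y, v y = 1)
    {s t : ℝ} (hs : 0 ≤ s) (ht : 0 ≤ t) :
    s * hellingerSq u v ≤ 2 * hellingerSq (s • u) (t • v) := by
  have hsu : ∀ y, 0 ≤ (s • u) y := fun y => mul_nonneg hs (hu0 y)
  have htv : ∀ y, 0 ≤ (t • v) y := fun y => mul_nonneg ht (hv0 y)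
  rw [hellingerSq_eq hu0 hv0, hellingerSq_eq hsu htv, bhattacharyya_smul hs ht]
  simp only [Pi.smul_apply, smul_eq_mul, ← mul_sum, hu1, hv1]
  have ha0 := bhattacharyya_nonneg u v
  have ha1 := bhattacharyya_le_one hu0 hu1 hv0 hv1
  have hamgm : 2 * √s * √t ≤ s + t := by
    nlinarith [sq_nonneg (√s - √t), Real.sq_sqrt hs, Real.sq_sqrt ht]
  nlinarith [mul_le_mul_of_nonneg_right hamgm ha0, mul_nonneg ht (sub_nonneg.2 ha1)]

lemma eq_sum_smul_of_eq_div_sum {f g : Y → ℝ} (hf : ∀ y, 0 ≤ f y)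
    (hg : ∑ y, f y ≠ 0 → ∀ y, g y = f y / ∑ y', f y') : f = (∑ y, f y) • g := by
  funext y
  by_cases hsum : ∑ y, f y = 0
  · simp [(sum_eq_zero_iff_of_nonneg fun y _ => hf y).1 hsum y, hsum]
  · simp [hg hsum y, mul_div_cancel₀ _ hsum]

end

theorem hellinger_conditioning_general
    {X Y : Type*} [Fintype X] [Fintype Y]
    (P Q : X → Y → ℝ)
    (hP0 : ∀ x y, 0 ≤ P x y)
    (hQ0 : ∀ x y, 0 ≤ Q x y)
    (pY qY : X → Y → ℝ)
    (hpY0 : ∀ x y, 0 ≤ pY x y) (hpY1 : ∀ x, ∑ y, pY x y = 1)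
    (hqY0 : ∀ x y, 0 ≤ qY x y) (hqY1 : ∀ x, ∑ y, qY x y = 1)
    (hpYc : ∀ x, (∑ y, P x y) ≠ 0 → ∀ y, pY x y = P x y / ∑ y', P x y')
    (hqYc : ∀ x, (∑ y, Q x y) ≠ 0 → ∀ y, qY x y = Q x y / ∑ y', Q x y') :
    ∑ x, (∑ y, P x y) * (∑ y, (Real.sqrt (pY x y) - Real.sqrt (qY x y)) ^ 2)
      ≤ 2 * ∑ x, ∑ y, (Real.sqrt (P x y) - Real.sqrt (Q x y)) ^ 2 := by
  rw [mul_sum]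
  refine sum_le_sum fun x _ => ?_
  have h := mul_hellingerSq_le_two_mul_hellingerSq_smul (hpY0 x) (hpY1 x) (hqY0 x) (hqY1 x)
    (Fintype.sum_nonneg (hP0 x)) (Fintype.sum_nonneg (hQ0 x))
  rwa [← eq_sum_smul_of_eq_div_sum (hP0 x) (hpYc x),
    ← eq_sum_smul_of_eq_div_sum (hQ0 x) (hqYc x)] at h

/-- Hellinger conditioning lemma: for joint distributions `P, Q` of a pair
`(X, Y)` on a finite space, with conditional kernels `pY, qY` (agreeing with the
conditional laws `P_{Y|X}, Q_{Y|X}` wherever the marginals are nonzero, and arbitrary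
probability distributions otherwise),
`E_{x ∼ P_X}[D_H²(pY x, qY x)] ≤ 2 D_H²(P, Q)`. -/
theorem hellinger_conditioning
    {X Y : Type*} [Fintype X] [Fintype Y]
    (P Q : X → Y → ℝ)
    (hP0 : ∀ x y, 0 ≤ P x y) (hP1 : ∑ x, ∑ y, P x y = 1)
    (hQ0 : ∀ x y, 0 ≤ Q x y) (hQ1 : ∑ x, ∑ y, Q x y = 1)
    (pY qY : X → Y → ℝ)
    (hpY0 : ∀ x y, 0 ≤ pY x y) (hpY1 : ∀ x, ∑ y, pY x y = 1)
    (hqY0 : ∀ x y, 0 ≤ qY x y) (hqY1 : ∀ x, ∑ y, qY x y = 1)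
    (hpYc : ∀ x, (∑ y, P x y) ≠ 0 → ∀ y, pY x y = P x y / ∑ y', P x y')
    (hqYc : ∀ x, (∑ y, Q x y) ≠ 0 → ∀ y, qY x y = Q x y / ∑ y', Q x y') :
    ∑ x, (∑ y, P x y) * (∑ y, (Real.sqrt (pY x y) - Real.sqrt (qY x y)) ^ 2)
      ≤ 2 * ∑ x, ∑ y, (Real.sqrt (P x y) - Real.sqrt (Q x y)) ^ 2 :=
  hellinger_conditioning_general P Q hP0 hQ0 pY qY hpY0 hpY1 hqY0 hqY1 hpYc hqYc
end

section
/- Martingale exponential concentration: Let (X_t)_{t <= T} be real-valued random variables adapted to a filtration (F_t)_{t <= T}. Then with probability at least 1 - delta, for all t in [T]: sum_{s=1}^t ( - log E[ exp(-X_s) | F_{s-1} ] ) <= sum_{s=1}^t X_s + log(1/delta). -/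
/-!
Let `g s = E[exp (-X s) | ℱ (s - 1)]`. Then `Z t = exp (∑_{s ≤ t} (-X s - log (g s)))` is a
nonnegative martingale with `Z 0 = 1`: each step multiplies it by `exp (-X s) / g s`, whose
conditional expectation given `ℱ (s - 1)` is `1`. Ville's (Doob's maximal) inequality bounds the
probability that `Z t` ever reaches `1 / δ` by `δ`, and `Z t < 1 / δ` is the claimed inequality
after taking logarithms.
-/

open MeasureTheory Finset
open scoped ENNReal

namespace MeasureTheory

variable {Ω : Type*} {m m₀ : MeasurableSpace Ω} {μ : Measure Ω}

lemma ae_pos_condExp (hm : m ≤ m₀) [SigmaFinite (μ.trim hm)] {f : Ω → ℝ}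
    (hf : Integrable f μ) (hpos : ∀ᵐ ω ∂μ, 0 < f ω) : ∀ᵐ ω ∂μ, 0 < μ[f|m] ω := by
  set A := {ω | μ[f|m] ω ≤ 0}
  have hA : MeasurableSet[m] A :=
    measurableSet_le stronglyMeasurable_condExp.measurable measurable_const
  have hle : ∫ ω in A, f ω ∂μ ≤ 0 := by
    rw [← setIntegral_condExp hm hf hA]
    exact setIntegral_nonpos (hm _ hA) fun ω hω => hω
  have hμA : μ A = 0 := by
    by_contra hne
    have hsupp : μ A ≤ μ (Function.support f ∩ A) :=
      measure_mono_ae (hpos.mono fun ω hω hωA => ⟨hω.ne', hωA⟩)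
    have : 0 < ∫ ω in A, f ω ∂μ := by
      rw [setIntegral_pos_iff_support_of_nonneg_ae (ae_restrict_of_ae (hpos.mono fun _ h => h.le))
        hf.integrableOn]
      exact (pos_iff_ne_zero.2 hne).trans_le hsupp
    linarith
  filter_upwards [measure_eq_zero_iff_ae_notMem.mp hμA] with ω hω
  simpa [A] using hω

/-- The pull-out property of `condExp`, in a form that needs no integrability of the product. -/
lemma lintegral_mul_ofReal_condExp (hm : m ≤ m₀) [SigmaFinite (μ.trim hm)] {f : Ω → ℝ}
    (hf : Integrable f μ) (hf0 : 0 ≤ᵐ[μ] f) {φ : Ω → ℝ≥0∞} (hφ : Measurable[m] φ) :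
    ∫⁻ ω, φ ω * ENNReal.ofReal (μ[f|m] ω) ∂μ = ∫⁻ ω, φ ω * ENNReal.ofReal (f ω) ∂μ := by
  have hcond : Integrable (μ[f|m]) μ := integrable_condExp
  have as_withDensity : ∀ {h : Ω → ℝ}, Integrable h μ →
      ∫⁻ ω, φ ω * ENNReal.ofReal (h ω) ∂μ
        = ∫⁻ ω, φ ω ∂(μ.withDensity fun ω => ENNReal.ofReal (h ω)).trim hm := by
    intro h hh
    rw [lintegral_trim hm hφ, lintegral_withDensity_eq_lintegral_mul₀
      hh.aemeasurable.ennreal_ofReal (hφ.le hm).aemeasurable]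
    exact lintegral_congr fun ω => mul_comm _ _
  rw [as_withDensity hf, as_withDensity hcond]
  congr 1
  refine @Measure.ext Ω m _ _ fun s hs => ?_
  rw [trim_measurableSet_eq hm hs, trim_measurableSet_eq hm hs,
    withDensity_apply _ (hm s hs), withDensity_apply _ (hm s hs),
    ← ofReal_integral_eq_lintegral_ofReal hcond.integrableOn
      (ae_restrict_of_ae (condExp_nonneg hf0)),
    ← ofReal_integral_eq_lintegral_ofReal hf.integrableOn (ae_restrict_of_ae hf0),
    setIntegral_condExp hm hf hs]

/-- Ville's inequality. -/
lemma Submartingale.measure_le_sup'_le [IsFiniteMeasure μ] {ℱ : Filtration ℕ m₀}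
    {f : ℕ → Ω → ℝ} (hf : Submartingale f ℱ μ) (hnonneg : 0 ≤ f) {c : ℝ} (hc : 0 < c) (n : ℕ) :
    μ {ω | c ≤ (range (n + 1)).sup' nonempty_range_add_one fun k => f k ω}
      ≤ ENNReal.ofReal ((∫ ω, f n ω ∂μ) / c) := by
  have hmax := maximal_ineq hf hnonneg (ε := c.toNNReal) n
  rw [Real.coe_toNNReal _ hc.le] at hmax
  have hsub := setIntegral_le_integral (s := {ω | c ≤ (range (n + 1)).sup' nonempty_range_add_one
    fun k => f k ω}) (hf.integrable n) (Filter.Eventually.of_forall (hnonneg n))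
  rw [ENNReal.ofReal_div_of_pos hc, ENNReal.le_div_iff_mul_le (by simp [hc]) (by simp), mul_comm]
  exact hmax.trans (ENNReal.ofReal_le_ofReal hsub)

section ExpMartingale

variable (μ) (ℱ : Filtration ℕ m₀) (X : ℕ → Ω → ℝ)

noncomputable def condExpExpNeg (s : ℕ) : Ω → ℝ :=
  μ[fun ω => Real.exp (-X s ω)|ℱ (s - 1)]

noncomputable def expMartingale (t : ℕ) (ω : Ω) : ℝ :=
  Real.exp (∑ s ∈ Icc 1 t, (-X s ω - Real.log (condExpExpNeg μ ℱ X s ω)))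

variable {μ ℱ X}

lemma condExpExpNeg_pos [IsFiniteMeasure μ] (hint : ∀ s, Integrable (fun ω => Real.exp (-X s ω)) μ)
    (s : ℕ) : ∀ᵐ ω ∂μ, 0 < condExpExpNeg μ ℱ X s ω :=
  ae_pos_condExp (ℱ.le _) (hint s) (Filter.Eventually.of_forall fun _ => Real.exp_pos _)

lemma expMartingale_pos (t : ℕ) (ω : Ω) : 0 < expMartingale μ ℱ X t ω :=
  Real.exp_pos _

lemma expMartingale_nonneg : 0 ≤ expMartingale μ ℱ X :=
  fun t ω => (expMartingale_pos t ω).le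

lemma expMartingale_zero : expMartingale μ ℱ X 0 = 1 := by
  ext ω
  simp [expMartingale]

lemma log_expMartingale (t : ℕ) (ω : Ω) :
    Real.log (expMartingale μ ℱ X t ω)
      = ∑ s ∈ Icc 1 t, -Real.log (condExpExpNeg μ ℱ X s ω) - ∑ s ∈ Icc 1 t, X s ω := by
  rw [expMartingale, Real.log_exp, ← sum_sub_distrib]
  exact sum_congr rfl fun s _ => by ring

lemma stronglyAdapted_expMartingale (hX : Adapted ℱ X) :
    StronglyAdapted ℱ (expMartingale μ ℱ X) := by
  intro t
  refine (Real.measurable_exp.comp (Finset.measurable_sum _ fun s hs => ?_)).stronglyMeasurable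
  have hst : s ≤ t := (mem_Icc.mp hs).2
  have hg : Measurable[ℱ (s - 1)] (condExpExpNeg μ ℱ X s) := stronglyMeasurable_condExp.measurable
  exact ((hX s).mono (ℱ.mono hst) le_rfl).neg.sub
    (Real.measurable_log.comp (hg.mono (ℱ.mono ((Nat.sub_le s 1).trans hst)) le_rfl))

lemma expMartingale_succ [IsFiniteMeasure μ]
    (hint : ∀ s, Integrable (fun ω => Real.exp (-X s ω)) μ) (t : ℕ) :
    expMartingale μ ℱ X (t + 1) =ᵐ[μ] fun ω =>
      expMartingale μ ℱ X t ω / condExpExpNeg μ ℱ X (t + 1) ω * Real.exp (-X (t + 1) ω) := by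
  filter_upwards [condExpExpNeg_pos hint (t + 1)] with ω hω
  rw [expMartingale, expMartingale, sum_Icc_succ_top (Nat.le_add_left 1 t), Real.exp_add,
    sub_eq_add_neg, Real.exp_add, Real.exp_neg (Real.log _), Real.exp_log hω]
  ring

lemma lintegral_expMartingale [IsProbabilityMeasure μ] (hX : Adapted ℱ X)
    (hint : ∀ s, Integrable (fun ω => Real.exp (-X s ω)) μ) (t : ℕ) :
    ∫⁻ ω, ENNReal.ofReal (expMartingale μ ℱ X t ω) ∂μ = 1 := by
  induction t with
  | zero => simp [expMartingale_zero]
  | succ t ih =>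
    have hsucc := expMartingale_succ (ℱ := ℱ) hint t
    have hg := condExpExpNeg_pos (ℱ := ℱ) hint (t + 1)
    set Z := expMartingale μ ℱ X
    set g := condExpExpNeg μ ℱ X (t + 1)
    have hratio : Measurable[ℱ t] fun ω => ENNReal.ofReal (Z t ω / g ω) :=
      ((stronglyAdapted_expMartingale hX t).measurable.div
        stronglyMeasurable_condExp.measurable).ennreal_ofReal
    calc ∫⁻ ω, ENNReal.ofReal (Z (t + 1) ω) ∂μ
        = ∫⁻ ω, ENNReal.ofReal (Z t ω / g ω) * ENNReal.ofReal (Real.exp (-X (t + 1) ω)) ∂μ := by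
          refine lintegral_congr_ae ?_
          filter_upwards [hsucc, hg] with ω h1 h2
          rw [h1, ENNReal.ofReal_mul (div_nonneg (expMartingale_nonneg t ω) h2.le)]
      _ = ∫⁻ ω, ENNReal.ofReal (Z t ω / g ω) * ENNReal.ofReal (g ω) ∂μ :=
          (lintegral_mul_ofReal_condExp (ℱ.le t) (hint (t + 1))
            (Filter.Eventually.of_forall fun _ => (Real.exp_pos _).le) hratio).symm
      _ = ∫⁻ ω, ENNReal.ofReal (Z t ω) ∂μ := by
          refine lintegral_congr_ae ?_
          filter_upwards [hg] with ω h2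
          rw [← ENNReal.ofReal_mul (div_nonneg (expMartingale_nonneg t ω) h2.le),
            div_mul_cancel₀ _ h2.ne']
      _ = 1 := ih

lemma integrable_expMartingale [IsProbabilityMeasure μ] (hX : Adapted ℱ X)
    (hint : ∀ s, Integrable (fun ω => Real.exp (-X s ω)) μ) (t : ℕ) :
    Integrable (expMartingale μ ℱ X t) μ := by
  refine ⟨((stronglyAdapted_expMartingale hX t).mono (ℱ.le t)).aestronglyMeasurable, ?_⟩
  rw [hasFiniteIntegral_iff_ofReal (Filter.Eventually.of_forall (expMartingale_nonneg t)),
    lintegral_expMartingale hX hint t]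
  exact ENNReal.one_lt_top

lemma integral_expMartingale [IsProbabilityMeasure μ] (hX : Adapted ℱ X)
    (hint : ∀ s, Integrable (fun ω => Real.exp (-X s ω)) μ) (t : ℕ) :
    ∫ ω, expMartingale μ ℱ X t ω ∂μ = 1 := by
  rw [integral_eq_lintegral_of_nonneg_ae (Filter.Eventually.of_forall (expMartingale_nonneg t))
    (integrable_expMartingale hX hint t).aestronglyMeasurable, lintegral_expMartingale hX hint t,
    ENNReal.toReal_one]

lemma martingale_expMartingale [IsProbabilityMeasure μ] (hX : Adapted ℱ X)
    (hint : ∀ s, Integrable (fun ω => Real.exp (-X s ω)) μ) :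
    Martingale (expMartingale μ ℱ X) ℱ μ := by
  refine martingale_nat (stronglyAdapted_expMartingale hX) (integrable_expMartingale hX hint)
    fun t => ?_
  have hsucc := expMartingale_succ (ℱ := ℱ) hint t
  have hg := condExpExpNeg_pos (ℱ := ℱ) hint (t + 1)
  set Z := expMartingale μ ℱ X
  set g := condExpExpNeg μ ℱ X (t + 1)
  have hratio : StronglyMeasurable[ℱ t] fun ω => Z t ω / g ω :=
    ((stronglyAdapted_expMartingale hX t).measurable.div
      stronglyMeasurable_condExp.measurable).stronglyMeasurable
  have hprod : Integrable ((fun ω => Z t ω / g ω) * fun ω => Real.exp (-X (t + 1) ω)) μ :=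
    (integrable_expMartingale hX hint (t + 1)).congr hsucc
  have hcancel : (fun ω => Z t ω / g ω) * g =ᵐ[μ] Z t := by
    filter_upwards [hg] with ω hω
    exact div_mul_cancel₀ _ hω.ne'
  exact ((condExp_congr_ae hsucc).trans
    ((condExp_mul_of_stronglyMeasurable_left hratio hprod (hint (t + 1))).trans hcancel)).symm

end ExpMartingale

end MeasureTheory

theorem martingale_exponential_concentration_general
    {Ω : Type*} [m : MeasurableSpace Ω] (μ : Measure Ω) [IsProbabilityMeasure μ]
    (ℱ : Filtration ℕ m) (X : ℕ → Ω → ℝ)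
    (hadapt : Adapted ℱ X)
    (hint : ∀ s, Integrable (fun ω => Real.exp (-X s ω)) μ)
    (T : ℕ) (δ : ℝ) (hδ0 : 0 < δ) :
    ENNReal.ofReal (1 - δ) ≤
      μ {ω | ∀ t ∈ Finset.Icc 1 T,
        ∑ s ∈ Finset.Icc 1 t,
            (-Real.log ((μ[(fun ω' => Real.exp (-X s ω')) | ℱ (s - 1)]) ω))
          ≤ (∑ s ∈ Finset.Icc 1 t, X s ω) + Real.log (1 / δ)} := by
  set Z := expMartingale μ ℱ X
  set S := {ω | δ⁻¹ ≤ (range (T + 1)).sup' nonempty_range_add_one fun k => Z k ω}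
  have hS : μ S ≤ ENNReal.ofReal δ := by
    have hville := (martingale_expMartingale hadapt hint).submartingale.measure_le_sup'_le
      expMartingale_nonneg (inv_pos.2 hδ0) T
    rwa [integral_expMartingale hadapt hint, one_div, inv_inv] at hville
  have hgood : Sᶜ ⊆ {ω | ∀ t ∈ Icc 1 T, ∑ s ∈ Icc 1 t, -Real.log (condExpExpNeg μ ℱ X s ω)
      ≤ ∑ s ∈ Icc 1 t, X s ω + Real.log (1 / δ)} := by
    intro ω hω t ht
    have hZt : Z t ω < δ⁻¹ := lt_of_le_of_lt
      (le_sup' (fun k => Z k ω) (mem_range.2 (Nat.lt_succ_of_le (mem_Icc.1 ht).2))) (not_le.1 hω)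
    have hlog := Real.log_lt_log (expMartingale_pos t ω) hZt
    rw [log_expMartingale, Real.log_inv] at hlog
    rw [one_div, Real.log_inv]
    linarith
  calc ENNReal.ofReal (1 - δ) = 1 - ENNReal.ofReal δ := by
        rw [ENNReal.ofReal_sub _ hδ0.le, ENNReal.ofReal_one]
    _ ≤ 1 - μ S := tsub_le_tsub_left hS 1
    _ ≤ μ Sᶜ := tsub_le_iff_left.2 (by simpa using measure_union_le (μ := μ) S Sᶜ)
    _ ≤ _ := measure_mono hgood

/-- Martingale exponential concentration: for real-valued random variables
`(X_t)_{t ≤ T}` adapted to a filtration `(F_t)_{t ≤ T}`, with probability at least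
`1 - δ`, for all `t ∈ [T]`:
`∑_{s=1}^t -log E[exp(-X_s) | F_{s-1}] ≤ ∑_{s=1}^t X_s + log(1/δ)`. -/
theorem martingale_exponential_concentration
    {Ω : Type*} [m : MeasurableSpace Ω] (μ : Measure Ω) [IsProbabilityMeasure μ]
    (ℱ : Filtration ℕ m) (X : ℕ → Ω → ℝ)
    (hadapt : Adapted ℱ X)
    (hint : ∀ s, Integrable (fun ω => Real.exp (-X s ω)) μ)
    (T : ℕ) (δ : ℝ) (hδ0 : 0 < δ) (hδ1 : δ < 1) :
    ENNReal.ofReal (1 - δ) ≤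
      μ {ω | ∀ t ∈ Finset.Icc 1 T,
        ∑ s ∈ Finset.Icc 1 t,
            (-Real.log ((μ[(fun ω' => Real.exp (-X s ω')) | ℱ (s - 1)]) ω))
          ≤ (∑ s ∈ Finset.Icc 1 t, X s ω) + Real.log (1 / δ)} :=
  martingale_exponential_concentration_general (m := m) μ ℱ X hadapt hint T δ hδ0
end

section
/- Linear l2-Eluder bound: Let x_1,...,x_K and y_1,...,y_K be vectors in R^d with ||x_k||_2 <= R_x and ||y_k||_2 <= R_y. If for every k, sum_{t < k} <x_t, y_k>^2 <= beta, then sum_{t=1}^K min{1, |<x_t, y_t>|} <= sqrt( 2 d K (1 + beta) log( 1 + (K/d) R_x^2 R_y^2 ) ). -/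
/-!
Put `λ = R_y⁻²` and `V_k = λ I + ∑_{t<k} x_t x_tᵀ`. The hypotheses say exactly that
`y_kᵀ V_k y_k ≤ 1 + β`, so Cauchy–Schwarz in the `V_k`-geometry gives
`⟨x_k, y_k⟩² ≤ (1 + β) x_kᵀ V_k⁻¹ x_k`. By the matrix determinant lemma
`det V_{k+1} = det V_k (1 + x_kᵀ V_k⁻¹ x_k)`, so `∑_k min{1, x_kᵀ V_k⁻¹ x_k}`, being at most
`2 ∑_k log (1 + x_kᵀ V_k⁻¹ x_k)`, telescopes to `2 log (det V_{K+1} / det V_1)`; AM–GM on the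
eigenvalues bounds this by `2 d log (1 + K R_x² R_y² / d)` (the elliptical potential lemma).
Cauchy–Schwarz over the `K` rounds turns the resulting bound on `∑_t min{1, ⟨x_t, y_t⟩²}` into
the claim.
-/

open Finset Matrix

namespace Real

lemma min_one_le_two_mul_log_one_add {a : ℝ} (ha : 0 ≤ a) : min 1 a ≤ 2 * log (1 + a) := by
  rcases le_total a 1 with h | h
  · have hlog : a / (1 + a) ≤ log (1 + a) := by
      have hsub : 1 - (1 + a)⁻¹ = a / (1 + a) := by field_simp; ring
      exact hsub ▸ one_sub_inv_le_log_of_pos (by positivity)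
    have : a ≤ 2 * (a / (1 + a)) := by
      rw [mul_div_assoc', le_div_iff₀ (by positivity)]; nlinarith
    rw [min_eq_right h]; linarith
  · have : log 2 ≤ log (1 + a) := log_le_log (by norm_num) (by linarith)
    rw [min_eq_left h]; linarith [log_two_gt_d9]

lemma prod_le_sum_div_card_pow {ι : Type*} (s : Finset ι) {z : ι → ℝ} (hz : ∀ i ∈ s, 0 ≤ z i) :
    ∏ i ∈ s, z i ≤ ((∑ i ∈ s, z i) / #s) ^ #s := by
  rcases s.eq_empty_or_nonempty with rfl | hs
  · simp
  have hcard : (0 : ℝ) < #s := by exact_mod_cast hs.card_pos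
  have hamgm := geom_mean_le_arith_mean_weighted s (fun _ => (#s : ℝ)⁻¹) z
    (fun _ _ => by positivity) (by simp [hcard.ne']) hz
  rw [← mul_sum, inv_mul_eq_div] at hamgm
  calc ∏ i ∈ s, z i = (∏ i ∈ s, z i ^ (#s : ℝ)⁻¹) ^ #s := by
        rw [← prod_pow]
        refine prod_congr rfl fun i hi => ?_
        rw [← rpow_natCast, ← rpow_mul (hz i hi), inv_mul_cancel₀ hcard.ne', rpow_one]
    _ ≤ _ := pow_le_pow_left₀ (prod_nonneg fun i hi => rpow_nonneg (hz i hi) _) hamgm _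

end Real

lemma min_one_mul_le_mul_min_one {c u : ℝ} (hc : 1 ≤ c) : min 1 (c * u) ≤ c * min 1 u := by
  rw [mul_min_of_nonneg _ _ (zero_le_one.trans hc), mul_one]
  exact min_le_min_right _ hc

lemma sq_min_one_abs (a : ℝ) : (min 1 |a|) ^ 2 = min 1 (a ^ 2) := by
  rcases le_total |a| 1 with h | h
  · rw [min_eq_right h, min_eq_right (sq_le_one_iff_abs_le_one a |>.mpr h), sq_abs]
  · rw [min_eq_left h, min_eq_left (one_le_sq_iff_one_le_abs a |>.mpr h), one_pow]

lemma sq_sum_min_one_abs_le {ι : Type*} (s : Finset ι) (f : ι → ℝ) :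
    (∑ i ∈ s, min 1 |f i|) ^ 2 ≤ #s * ∑ i ∈ s, min 1 (f i ^ 2) := by
  simpa only [sq_min_one_abs] using sq_sum_le_card_mul_sum_sq (s := s) (f := fun i => min 1 |f i|)

section EuclideanNorm

variable {n : Type*} [Fintype n] {v : n → ℝ} {R : ℝ}

lemma dotProduct_self_le_sq_of_sqrt_le (h : √(∑ i, v i ^ 2) ≤ R) : v ⬝ᵥ v ≤ R ^ 2 := by
  simpa [dotProduct, sq] using (Real.sqrt_le_iff.mp h).2

lemma eq_zero_of_sqrt_le_of_nonpos (h : √(∑ i, v i ^ 2) ≤ R) (hR : R ≤ 0) : v = 0 := by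
  have hsum : ∑ i, v i ^ 2 = 0 := le_antisymm
    (Real.sqrt_eq_zero'.mp (le_antisymm (h.trans hR) (Real.sqrt_nonneg _))) (by positivity)
  exact dotProduct_self_eq_zero.mp (by simpa [dotProduct, sq] using hsum)

end EuclideanNorm

namespace Matrix

variable {n : Type*} [Fintype n] [DecidableEq n]

lemma det_add_vecMulVec {R : Type*} [CommRing R] {M : Matrix n n R} (hM : IsUnit M.det)
    (u v : n → R) : (M + vecMulVec u v).det = M.det * (1 + v ⬝ᵥ M⁻¹ *ᵥ u) := by
  rw [vecMulVec_eq Unit, det_add_replicateCol_mul_replicateRow hM, det_unique (1 + _), add_apply,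
    one_apply_eq, Matrix.mul_assoc, ← replicateCol_mulVec, replicateRow_mul_replicateCol_apply]

lemma dotProduct_sq_le_of_posDef {M : Matrix n n ℝ} (hM : M.PosDef) (a b : n → ℝ) :
    (a ⬝ᵥ b) ^ 2 ≤ (a ⬝ᵥ M⁻¹ *ᵥ a) * (b ⬝ᵥ M *ᵥ b) := by
  have hMM : M *ᵥ (M⁻¹ *ᵥ a) = a := by
    rw [mulVec_mulVec, mul_nonsing_inv _ hM.det_pos.ne'.isUnit, one_mulVec]
  have hsymm : Mᵀ = M := (isHermitian_iff_isSymm.mp hM.isHermitian).eq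
  have hcs := (toBilin' M).apply_mul_apply_le_of_forall_zero_le
    (fun v => by simpa [toBilin'_apply'] using hM.posSemidef.dotProduct_mulVec_nonneg v)
    (M⁻¹ *ᵥ a) b
  rwa [toBilin'_apply', toBilin'_apply', toBilin'_apply', toBilin'_apply', dotProduct_mulVec,
    ← mulVec_transpose, hsymm, hMM, dotProduct_comm b, ← sq, dotProduct_comm _ a] at hcs

lemma PosSemidef.det_le_trace_div_card_pow {A : Matrix n n ℝ} (hA : A.PosSemidef) :
    A.det ≤ (A.trace / Fintype.card n) ^ Fintype.card n := by
  rw [hA.isHermitian.det_eq_prod_eigenvalues, hA.isHermitian.trace_eq_sum_eigenvalues]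
  simpa using Real.prod_le_sum_div_card_pow univ fun i _ => hA.eigenvalues_nonneg i

end Matrix

section DesignMatrix

variable {n ι : Type*} [DecidableEq n] (lam : ℝ) (x : ι → n → ℝ)

def designMatrix (s : Finset ι) : Matrix n n ℝ :=
  lam • 1 + ∑ t ∈ s, vecMulVec (x t) (x t)

variable {lam}

lemma designMatrix_insert [DecidableEq ι] {s : Finset ι} {a : ι} (ha : a ∉ s) :
    designMatrix lam x (insert a s) = designMatrix lam x s + vecMulVec (x a) (x a) := by
  rw [designMatrix, designMatrix, sum_insert ha, add_comm (vecMulVec _ _), add_assoc]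

variable [Fintype n]

lemma det_designMatrix_empty :
    (designMatrix lam x ∅ : Matrix n n ℝ).det = lam ^ Fintype.card n := by
  simp [designMatrix]

lemma posDef_designMatrix (hlam : 0 < lam) (s : Finset ι) :
    (designMatrix lam x s : Matrix n n ℝ).PosDef :=
  (PosDef.one.smul hlam).add_posSemidef <|
    posSemidef_sum s fun t _ => by simpa using posSemidef_vecMulVec_self_star (x t)

lemma dotProduct_inv_designMatrix_mulVec_nonneg (hlam : 0 < lam) (s : Finset ι) (a : n → ℝ) :
    0 ≤ a ⬝ᵥ (designMatrix lam x s)⁻¹ *ᵥ a := by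
  simpa using (posDef_designMatrix x hlam s).inv.posSemidef.dotProduct_mulVec_nonneg a

lemma dotProduct_designMatrix_mulVec (s : Finset ι) (v : n → ℝ) :
    v ⬝ᵥ designMatrix lam x s *ᵥ v = lam * (v ⬝ᵥ v) + ∑ t ∈ s, (x t ⬝ᵥ v) ^ 2 := by
  simp only [designMatrix, add_mulVec, sum_mulVec, dotProduct_add, dotProduct_sum, smul_mulVec,
    one_mulVec, dotProduct_smul, vecMulVec_mulVec, op_smul_eq_mul, smul_eq_mul]
  congr 1
  exact sum_congr rfl fun t _ => by rw [dotProduct_comm v, sq]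

lemma trace_designMatrix (s : Finset ι) :
    (designMatrix lam x s : Matrix n n ℝ).trace = lam * Fintype.card n + ∑ t ∈ s, x t ⬝ᵥ x t := by
  simp [designMatrix, trace_sum]

lemma min_one_sq_dotProduct_le (hlam : 0 < lam) {s : Finset ι} {a y : n → ℝ} {β : ℝ}
    (hβ : 0 ≤ β) (hy : lam * (y ⬝ᵥ y) ≤ 1) (hs : ∑ t ∈ s, (x t ⬝ᵥ y) ^ 2 ≤ β) :
    min 1 ((a ⬝ᵥ y) ^ 2) ≤ (1 + β) * min 1 (a ⬝ᵥ (designMatrix lam x s)⁻¹ *ᵥ a) := by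
  have hV := posDef_designMatrix x hlam s
  have hyV : y ⬝ᵥ designMatrix lam x s *ᵥ y ≤ 1 + β := by
    rw [dotProduct_designMatrix_mulVec]; linarith
  have hcs : (a ⬝ᵥ y) ^ 2 ≤ (1 + β) * (a ⬝ᵥ (designMatrix lam x s)⁻¹ *ᵥ a) := by
    rw [mul_comm]
    refine (dotProduct_sq_le_of_posDef hV a y).trans ?_
    gcongr
    exact dotProduct_inv_designMatrix_mulVec_nonneg x hlam s a
  exact (min_le_min_left 1 hcs).trans (min_one_mul_le_mul_min_one (by linarith))

lemma log_det_designMatrix_sub_le [Nonempty n] (hlam : 0 < lam) {R : ℝ} {s : Finset ι}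
    (hR : ∀ t ∈ s, x t ⬝ᵥ x t ≤ R) :
    Real.log (designMatrix lam x s).det - Real.log (designMatrix lam x ∅ : Matrix n n ℝ).det
      ≤ Fintype.card n * Real.log (1 + #s * R / (Fintype.card n * lam)) := by
  set d := Fintype.card n
  set g := 1 + #s * R / (d * lam)
  have hd : (0 : ℝ) < d := by exact_mod_cast Fintype.card_pos
  have hV := posDef_designMatrix x hlam s
  have htrace : (designMatrix lam x s).trace ≤ lam * g * d := by
    have hsum : ∑ t ∈ s, x t ⬝ᵥ x t ≤ #s * R := by simpa using sum_le_sum hR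
    calc (designMatrix lam x s).trace ≤ lam * d + #s * R := by
          rw [trace_designMatrix]; linarith
      _ = lam * g * d := by simp only [g]; field_simp
  have hg : 0 < g := by
    have hpos := hV.trace_pos.trans_le htrace
    rw [mul_right_comm] at hpos
    exact pos_of_mul_pos_right hpos (by positivity)
  have hdet : (designMatrix lam x s).det ≤ lam ^ d * g ^ d := by
    rw [← mul_pow]
    refine hV.posSemidef.det_le_trace_div_card_pow.trans
      (pow_le_pow_left₀ (div_nonneg hV.trace_pos.le hd.le) ?_ d)
    rwa [div_le_iff₀ hd]
  calc Real.log (designMatrix lam x s).det - Real.log (designMatrix lam x ∅ : Matrix n n ℝ).det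
      ≤ Real.log (lam ^ d * g ^ d) - Real.log (lam ^ d) := by
        rw [det_designMatrix_empty]; gcongr; exact hV.det_pos
    _ = d * Real.log g := by
        rw [Real.log_mul (by positivity) (by positivity), Real.log_pow, Real.log_pow]; ring

end DesignMatrix

section EllipticalPotential

variable {n : Type*} [Fintype n] [DecidableEq n] {lam : ℝ} (x : ℕ → n → ℝ)

lemma sum_log_one_add_eq_log_det_designMatrix (hlam : 0 < lam) (K : ℕ) :
    ∑ k ∈ Icc 1 K, Real.log (1 + x k ⬝ᵥ (designMatrix lam x (Ico 1 k))⁻¹ *ᵥ x k)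
      = Real.log (designMatrix lam x (Icc 1 K)).det
        - Real.log (designMatrix lam x ∅ : Matrix n n ℝ).det := by
  induction K with
  | zero => simp
  | succ K ih =>
    have hV := posDef_designMatrix x hlam (Icc 1 K)
    have hquad := dotProduct_inv_designMatrix_mulVec_nonneg x hlam (Icc 1 K) (x (K + 1))
    rw [sum_Icc_succ_top (by omega), ih, Ico_add_one_right_eq_Icc,
      ← insert_Icc_right_eq_Icc_add_one (by omega), designMatrix_insert x (by simp),
      det_add_vecMulVec hV.det_pos.ne'.isUnit, Real.log_mul hV.det_pos.ne' (by positivity)]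
    ring

theorem elliptical_potential_le [Nonempty n] (hlam : 0 < lam) {R : ℝ} {K : ℕ}
    (hR : ∀ k ∈ Icc 1 K, x k ⬝ᵥ x k ≤ R) :
    ∑ k ∈ Icc 1 K, min 1 (x k ⬝ᵥ (designMatrix lam x (Ico 1 k))⁻¹ *ᵥ x k)
      ≤ 2 * Fintype.card n * Real.log (1 + K * R / (Fintype.card n * lam)) := by
  calc ∑ k ∈ Icc 1 K, min 1 (x k ⬝ᵥ (designMatrix lam x (Ico 1 k))⁻¹ *ᵥ x k)
      ≤ ∑ k ∈ Icc 1 K, 2 * Real.log (1 + x k ⬝ᵥ (designMatrix lam x (Ico 1 k))⁻¹ *ᵥ x k) :=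
        sum_le_sum fun k _ => Real.min_one_le_two_mul_log_one_add <|
          dotProduct_inv_designMatrix_mulVec_nonneg x hlam _ (x k)
    _ = 2 * (Real.log (designMatrix lam x (Icc 1 K)).det
          - Real.log (designMatrix lam x ∅ : Matrix n n ℝ).det) := by
        rw [← mul_sum, sum_log_one_add_eq_log_det_designMatrix x hlam]
    _ ≤ 2 * (Fintype.card n * Real.log (1 + K * R / (Fintype.card n * lam))) := by
        gcongr
        simpa using log_det_designMatrix_sub_le x hlam hR
    _ = _ := by ring

end EllipticalPotential

/-- Linear ℓ₂-Eluder bound: for `x_k, y_k ∈ ℝᵈ` with `‖x_k‖₂ ≤ R_x`,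
`‖y_k‖₂ ≤ R_y`, if for every `k ∈ [K]` `∑_{t<k} ⟨x_t, y_k⟩² ≤ β`, then
`∑_{t=1}^K min{1, |⟨x_t, y_t⟩|} ≤ √(2 d K (1 + β) log(1 + (K/d) R_x² R_y²))`. -/
theorem linear_l2_eluder
    (d K : ℕ) (hd : 0 < d)
    (x y : ℕ → Fin d → ℝ) (Rx Ry β : ℝ) (hβ : 0 ≤ β)
    (hx : ∀ k ∈ Finset.Icc 1 K, Real.sqrt (∑ i, (x k i) ^ 2) ≤ Rx)
    (hy : ∀ k ∈ Finset.Icc 1 K, Real.sqrt (∑ i, (y k i) ^ 2) ≤ Ry)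
    (hpre : ∀ k ∈ Finset.Icc 1 K, ∑ t ∈ Finset.Ico 1 k, (x t ⬝ᵥ y k) ^ 2 ≤ β) :
    ∑ t ∈ Finset.Icc 1 K, min 1 |x t ⬝ᵥ y t|
      ≤ Real.sqrt (2 * d * K * (1 + β) * Real.log (1 + ((K : ℝ) / d) * Rx ^ 2 * Ry ^ 2)) := by
  rcases le_or_gt Ry 0 with hRy | hRy
  · rw [sum_eq_zero fun k hk => by simp [eq_zero_of_sqrt_le_of_nonpos (hy k hk) hRy]]
    exact Real.sqrt_nonneg _
  have : Nonempty (Fin d) := ⟨⟨0, hd⟩⟩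
  set lam := (Ry ^ 2)⁻¹
  have hlam : 0 < lam := by positivity
  have hstep : ∀ k ∈ Icc 1 K, min 1 ((x k ⬝ᵥ y k) ^ 2)
      ≤ (1 + β) * min 1 (x k ⬝ᵥ (designMatrix lam x (Ico 1 k))⁻¹ *ᵥ x k) := fun k hk => by
    refine min_one_sq_dotProduct_le x hlam hβ ?_ (hpre k hk)
    calc lam * (y k ⬝ᵥ y k) ≤ lam * Ry ^ 2 := by
          gcongr; exact dotProduct_self_le_sq_of_sqrt_le (hy k hk)
      _ = 1 := inv_mul_cancel₀ (by positivity)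
  have hpot := elliptical_potential_le x hlam fun k hk => dotProduct_self_le_sq_of_sqrt_le (hx k hk)
  simp only [Fintype.card_fin] at hpot
  refine Real.le_sqrt_of_sq_le ?_
  calc (∑ t ∈ Icc 1 K, min 1 |x t ⬝ᵥ y t|) ^ 2
      ≤ K * ∑ t ∈ Icc 1 K, min 1 ((x t ⬝ᵥ y t) ^ 2) := by
        simpa using sq_sum_min_one_abs_le (Icc 1 K) fun t => x t ⬝ᵥ y t
    _ ≤ K * ((1 + β) * (2 * d * Real.log (1 + K * Rx ^ 2 / (d * lam)))) := by
        gcongr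
        exact (sum_le_sum hstep).trans (by rw [← mul_sum]; gcongr)
    _ = _ := by
        simp only [lam]
        field_simp
end
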